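/- arXiv:math/0211369 — 12 statements merged into one kernel-verified Lean document; each statement's English description precedes it below -/
import Mathlib

section
/- Let I and J be finite nonempty sets and let B : J × I → ℝ be a Markovian (row-stochastic) matrix, i.e. b(j,i) ≥ 0 and ∑_i b(j,i) = 1 for all j. Define ε = min over all j, j' ∈ J and all subsets I₁ ⊆ I of (∑_{i ∈ I₁} b(j,i) + ∑_{i ∉ I₁} b(j',i)). Then for every function f : I → ℝ, the variation of Bf (the difference between its maximum and minimum, where (Bf)(j) = ∑_i b(j,i) f(i)) satisfies var(Bf) ≤ (1 − ε) · var(f). -/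
open Finset

/-- variation contraction for a Markovian (row-stochastic) matrix. -/
theorem stmt0 {I J : Type*} [Fintype I] [DecidableEq I] [Fintype J] [Nonempty I] [Nonempty J]
    (b : J → I → ℝ) (hnonneg : ∀ j i, 0 ≤ b j i) (hrow : ∀ j, ∑ i, b j i = 1)
    (ε : ℝ)
    (hε : IsLeast {x : ℝ | ∃ (j j' : J) (I₁ : Finset I),
      x = ∑ i ∈ I₁, b j i + ∑ i ∈ I₁ᶜ, b j' i} ε)
    (f : I → ℝ) :
    univ.sup' univ_nonempty (fun j => ∑ i, b j i * f i)
      - univ.inf' univ_nonempty (fun j => ∑ i, b j i * f i)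
      ≤ (1 - ε) * (univ.sup' univ_nonempty f - univ.inf' univ_nonempty f) := by
  set M := univ.sup' univ_nonempty f with hM
  set m := univ.inf' univ_nonempty f with hm
  have hMm : m ≤ M := by
    obtain ⟨i⟩ := (inferInstance : Nonempty I)
    exact le_trans (inf'_le _ (mem_univ i)) (le_sup' _ (mem_univ i))
  obtain ⟨j₀, _, hj₀⟩ := exists_mem_eq_sup' (univ_nonempty (α := J))
    (fun j => ∑ i, b j i * f i)
  obtain ⟨j₁, _, hj₁⟩ := exists_mem_eq_inf' (univ_nonempty (α := J))
    (fun j => ∑ i, b j i * f i)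
  rw [hj₀, hj₁]
  classical
  set S : Finset I := univ.filter (fun i => b j₁ i ≤ b j₀ i) with hS
  have hsplit : (∑ i, b j₀ i * f i) - (∑ i, b j₁ i * f i)
      = ∑ i ∈ S, (b j₀ i - b j₁ i) * f i + ∑ i ∈ Sᶜ, (b j₀ i - b j₁ i) * f i := by
    rw [sum_add_sum_compl, ← Finset.sum_sub_distrib]
    congr 1; ext i; ring
  have hc0 : ∑ i ∈ S, (b j₀ i - b j₁ i) + ∑ i ∈ Sᶜ, (b j₀ i - b j₁ i) = 0 := by
    rw [sum_add_sum_compl, Finset.sum_sub_distrib, hrow, hrow, sub_self]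
  have h1 : ∑ i ∈ S, (b j₀ i - b j₁ i) * f i ≤ (∑ i ∈ S, (b j₀ i - b j₁ i)) * M := by
    rw [Finset.sum_mul]
    refine Finset.sum_le_sum fun i hi => ?_
    have hb : 0 ≤ b j₀ i - b j₁ i := by
      simp only [hS, mem_filter] at hi; linarith [hi.2]
    exact mul_le_mul_of_nonneg_left (le_sup' _ (mem_univ i)) hb
  have h2 : ∑ i ∈ Sᶜ, (b j₀ i - b j₁ i) * f i ≤ (∑ i ∈ Sᶜ, (b j₀ i - b j₁ i)) * m := by
    rw [Finset.sum_mul]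
    refine Finset.sum_le_sum fun i hi => ?_
    have hb : b j₀ i - b j₁ i ≤ 0 := by
      simp only [hS, mem_compl, mem_filter, mem_univ, true_and, not_le] at hi
      linarith
    have hin : m ≤ f i := inf'_le f (mem_univ i)
    nlinarith
  have hcε : ∑ i ∈ S, (b j₀ i - b j₁ i) ≤ 1 - ε := by
    have hmem : (∑ i ∈ S, b j₁ i + ∑ i ∈ Sᶜ, b j₀ i) ∈
        {x : ℝ | ∃ (j j' : J) (I₁ : Finset I),
          x = ∑ i ∈ I₁, b j i + ∑ i ∈ I₁ᶜ, b j' i} := ⟨j₁, j₀, S, rfl⟩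
    have hge := hε.2 hmem
    have h₀ : ∑ i ∈ S, b j₀ i + ∑ i ∈ Sᶜ, b j₀ i = 1 := by
      rw [sum_add_sum_compl, hrow]
    rw [Finset.sum_sub_distrib]
    linarith
  have hcnn : 0 ≤ ∑ i ∈ S, (b j₀ i - b j₁ i) := by
    refine Finset.sum_nonneg fun i hi => ?_
    simp only [hS, mem_filter] at hi; linarith [hi.2]
  calc (∑ i, b j₀ i * f i) - (∑ i, b j₁ i * f i)
      ≤ (∑ i ∈ S, (b j₀ i - b j₁ i)) * M + (∑ i ∈ Sᶜ, (b j₀ i - b j₁ i)) * m := by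
        rw [hsplit]; exact add_le_add h1 h2
    _ = (∑ i ∈ S, (b j₀ i - b j₁ i)) * (M - m) := by
        have : ∑ i ∈ Sᶜ, (b j₀ i - b j₁ i) = - ∑ i ∈ S, (b j₀ i - b j₁ i) := by
          linarith
        rw [this]; ring
    _ ≤ (1 - ε) * (M - m) := mul_le_mul_of_nonneg_right hcε (by linarith)
end

section
/- Let I and J be finite nonempty sets, let a : J × I → ℝ be a matrix with strictly positive entries, and let u : I → ℝ be a strictly positive vector. Define the Markovian matrix b(j,i) = a(j,i)·u(i) / (∑_{i'} a(j,i')·u(i')). Then for every f : I → ℝ, var(Bf) ≤ (1 − a_min / a_max) · var(f), where a_min and a_max are the smallest and largest entries of a, and (Bf)(j) = ∑_i b(j,i) f(i). -/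
open Finset

/-- variation contraction for the Markovian normalization of a
strictly positive matrix. -/
theorem stmt1 {I J : Type*} [Fintype I] [Fintype J] [Nonempty I] [Nonempty J]
    (a : J → I → ℝ) (hpos : ∀ j i, 0 < a j i)
    (u : I → ℝ) (hu : ∀ i, 0 < u i)
    (b : J → I → ℝ)
    (hb : ∀ j i, b j i = a j i * u i / ∑ i', a j i' * u i')
    (f : I → ℝ) :
    univ.sup' univ_nonempty (fun j => ∑ i, b j i * f i)
      - univ.inf' univ_nonempty (fun j => ∑ i, b j i * f i)
      ≤ (1 - (univ.inf' univ_nonempty (fun p : J × I => a p.1 p.2)) /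
             (univ.sup' univ_nonempty (fun p : J × I => a p.1 p.2))) *
        (univ.sup' univ_nonempty f - univ.inf' univ_nonempty f) := by
  classical
  set M := univ.sup' univ_nonempty f with hM
  set m := univ.inf' univ_nonempty f with hm
  set amin := univ.inf' univ_nonempty (fun p : J × I => a p.1 p.2) with hamin
  set amax := univ.sup' univ_nonempty (fun p : J × I => a p.1 p.2) with hamax
  have hamin_pos : 0 < amin := by
    rw [hamin, Finset.lt_inf'_iff]
    exact fun p _ => hpos p.1 p.2
  have hamax_pos : 0 < amax := by
    obtain ⟨p⟩ := (inferInstance : Nonempty (J × I))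
    exact (hpos p.1 p.2).trans_le (Finset.le_sup' (fun p : J × I => a p.1 p.2) (mem_univ p))
  set U := ∑ i, u i with hU
  have hU_pos : 0 < U := Finset.sum_pos (fun i _ => hu i) univ_nonempty
  set S := fun j => ∑ i', a j i' * u i' with hS
  have hS_pos : ∀ j, 0 < S j := fun j =>
    Finset.sum_pos (fun i _ => mul_pos (hpos j i) (hu i)) univ_nonempty
  have hS_le : ∀ j, S j ≤ amax * U := by
    intro j
    rw [hU, Finset.mul_sum]
    refine Finset.sum_le_sum fun i _ => ?_
    exact mul_le_mul_of_nonneg_right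
      (Finset.le_sup' (fun p : J × I => a p.1 p.2) (mem_univ (j, i))) (hu i).le
  -- key lower bound on b
  have hb_ge : ∀ j i, amin / amax * (u i / U) ≤ b j i := by
    intro j i
    rw [hb, div_mul_div_comm]
    refine div_le_div₀ (mul_pos (hpos j i) (hu i)).le ?_ (hS_pos j) (hS_le j)
    exact mul_le_mul_of_nonneg_right
      (Finset.inf'_le (fun p : J × I => a p.1 p.2) (mem_univ (j, i))) (hu i).le
  have hb_nonneg : ∀ j i, 0 ≤ b j i := fun j i =>
    le_trans (mul_nonneg (div_nonneg hamin_pos.le hamax_pos.le)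
      (div_nonneg (hu i).le hU_pos.le)) (hb_ge j i)
  have rowsum : ∀ j, ∑ i, b j i = 1 := by
    intro j
    simp only [hb, ← Finset.sum_div]
    exact div_self (hS_pos j).ne'
  have nusum : ∑ i, u i / U = 1 := by
    rw [← Finset.sum_div]; exact div_self hU_pos.ne'
  have hfM : ∀ i, f i ≤ M := fun i => Finset.le_sup' f (mem_univ i)
  have hmf : ∀ i, m ≤ f i := fun i => Finset.inf'_le f (mem_univ i)
  set ε := amin / amax with hε
  have hε_pos : 0 ≤ ε := by positivity
  set A := ∑ i, u i / U * (M - f i) with hA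
  set B := ∑ i, u i / U * (f i - m) with hB
  have hAB : A + B = M - m := by
    rw [hA, hB, ← Finset.sum_add_distrib]
    have : ∀ i ∈ (univ : Finset I),
        u i / U * (M - f i) + u i / U * (f i - m) = u i / U * (M - m) := by
      intro i _; ring
    rw [Finset.sum_congr rfl this, ← Finset.sum_mul, nusum, one_mul]
  have upper : ∀ j, ∑ i, b j i * f i ≤ M - ε * A := by
    intro j
    have h1 : ∑ i, b j i * (M - f i) = M - ∑ i, b j i * f i := by
      simp only [mul_sub]
      rw [Finset.sum_sub_distrib, ← Finset.sum_mul, rowsum, one_mul]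
    have h3 : ε * A ≤ ∑ i, b j i * (M - f i) := by
      rw [hA, Finset.mul_sum]
      refine Finset.sum_le_sum fun i _ => ?_
      rw [← mul_assoc]
      exact mul_le_mul_of_nonneg_right (hb_ge j i) (by linarith [hfM i])
    linarith
  have lower : ∀ j, m + ε * B ≤ ∑ i, b j i * f i := by
    intro j
    have h1 : ∑ i, b j i * (f i - m) = (∑ i, b j i * f i) - m := by
      simp only [mul_sub]
      rw [Finset.sum_sub_distrib, ← Finset.sum_mul, rowsum, one_mul]
    have h3 : ε * B ≤ ∑ i, b j i * (f i - m) := by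
      rw [hB, Finset.mul_sum]
      refine Finset.sum_le_sum fun i _ => ?_
      rw [← mul_assoc]
      exact mul_le_mul_of_nonneg_right (hb_ge j i) (by linarith [hmf i])
    linarith
  have hsup : univ.sup' univ_nonempty (fun j => ∑ i, b j i * f i) ≤ M - ε * A :=
    Finset.sup'_le _ _ fun j _ => upper j
  have hinf : m + ε * B ≤ univ.inf' univ_nonempty (fun j => ∑ i, b j i * f i) :=
    Finset.le_inf' _ _ fun j _ => lower j
  have : (1 - ε) * (M - m) = M - m - ε * (A + B) := by rw [hAB]; ring
  linarith
end

section
/- Let I be a finite nonempty set and let a : I × I → ℝ be a nonnegative matrix which is primitive, i.e. there exists L ≥ 1 such that all entries of the matrix power a^L are strictly positive. Then there exists a unique pair (λ, μ) where λ > 0 and μ is a probability vector on I (μ(i) ≥ 0, ∑ μ(i) = 1) satisfying A*μ = λ·μ, where (A*μ)(i) = ∑_j a(j,i)·μ(j). -/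
/-!
Work with `m = aᵀ`. Existence is the Collatz–Wielandt argument: maximize `t` over the compact
set of pairs `(t, x)` with `x` a probability vector and `t • x ≤ m *ᵥ x`. At a maximizer, if
`m *ᵥ x ≠ t • x`, applying the positive matrix `m ^ L` to the gap makes the inequality strict in
every coordinate for `w = m ^ L *ᵥ x`, so `t` could be increased.

Pairing a nonnegative eigenvector of `aᵀ` with a positive eigenvector of `a` (found the same way)
shows that all such eigenvectors share one eigenvalue. Two probability eigenvectors `x, y` for it
coincide: subtracting from `y` the largest multiple of `x` that stays below it leaves a nonnegative
eigenvector with a zero entry, and `m ^ L` forces it to vanish.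
-/

open Finset Filter Topology

namespace Matrix

variable {I R : Type*} [Fintype I]

section CommSemiring

variable [CommSemiring R] [DecidableEq I]

lemma pow_mulVec_eq_smul {m : Matrix I I R} {l : R} {x : I → R} (h : m *ᵥ x = l • x) (n : ℕ) :
    (m ^ n) *ᵥ x = l ^ n • x := by
  induction n with
  | zero => simp
  | succ n ih => rw [pow_succ, ← mulVec_mulVec, h, mulVec_smul, ih, smul_smul, pow_succ']

end CommSemiring

section OrderedField

variable [Field R] [LinearOrder R] [IsStrictOrderedRing R]

lemma ne_zero_of_mem_stdSimplex {x : I → R} (hx : x ∈ stdSimplex R I) : x ≠ 0 := by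
  rintro rfl
  simpa using hx.2

lemma inv_sum_smul_mem_stdSimplex {w : I → R} (hw : 0 ≤ w) (hsum : ∑ i, w i ≠ 0) :
    (∑ i, w i)⁻¹ • w ∈ stdSimplex R I :=
  ⟨fun i => mul_nonneg (inv_nonneg.2 (sum_nonneg fun j _ => hw j)) (hw i), by
    simp only [Pi.smul_apply, smul_eq_mul, ← mul_sum, inv_mul_cancel₀ hsum]⟩

lemma dotProduct_pos_of_pos_of_nonneg {v x : I → R} (hv : ∀ i, 0 < v i) (hx : 0 ≤ x)
    (hx0 : x ≠ 0) : 0 < v ⬝ᵥ x := by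
  obtain ⟨j, hj⟩ := Function.ne_iff.1 hx0
  exact sum_pos' (fun i _ => mul_nonneg (hv i).le (hx i))
    ⟨j, mem_univ j, mul_pos (hv j) ((hx j).lt_of_ne' hj)⟩

lemma mulVec_pos_of_pos_of_nonneg {m : Matrix I I R} (hm : ∀ i j, 0 < m i j) {x : I → R}
    (hx : 0 ≤ x) (hx0 : x ≠ 0) (i : I) : 0 < (m *ᵥ x) i :=
  dotProduct_pos_of_pos_of_nonneg (hm i) hx hx0

lemma le_sum_of_smul_le_mulVec {m : Matrix I I R} (hm : ∀ i j, 0 ≤ m i j) {t : R} {x : I → R}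
    (hx : x ∈ stdSimplex R I) (h : t • x ≤ m *ᵥ x) : t ≤ ∑ i, ∑ j, m i j :=
  calc t = ∑ i, t * x i := by rw [← mul_sum, hx.2, mul_one]
    _ ≤ ∑ i, (m *ᵥ x) i := sum_le_sum fun i _ => h i
    _ ≤ ∑ i, ∑ j, m i j := sum_le_sum fun i _ => sum_le_sum fun j _ =>
        mul_le_of_le_one_right (hm i j) (mem_Icc_of_mem_stdSimplex hx j).2

lemma eq_of_mulVec_transpose_eq_smul {a : Matrix I I R} {ρ l : R} {v μ : I → R}
    (hv : ∀ i, 0 < v i) (hav : a *ᵥ v = ρ • v) (hμ : 0 ≤ μ) (hμ0 : μ ≠ 0)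
    (haμ : aᵀ *ᵥ μ = l • μ) : l = ρ := by
  have hpos : 0 < μ ⬝ᵥ v := dotProduct_comm v μ ▸ dotProduct_pos_of_pos_of_nonneg hv hμ hμ0
  refine mul_right_cancel₀ hpos.ne' ?_
  calc l * (μ ⬝ᵥ v) = (aᵀ *ᵥ μ) ⬝ᵥ v := by rw [haμ, smul_dotProduct, smul_eq_mul]
    _ = μ ⬝ᵥ (a *ᵥ v) := by rw [mulVec_transpose, dotProduct_mulVec]
    _ = ρ * (μ ⬝ᵥ v) := by rw [hav, dotProduct_smul, smul_eq_mul]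

variable [DecidableEq I]

lemma pow_mul_apply_pos {m : Matrix I I R} {L : ℕ} (hm : ∀ i j, 0 < (m ^ L) i j) {l : R}
    {x : I → R} (hx : 0 ≤ x) (hx0 : x ≠ 0) (h : m *ᵥ x = l • x) (i : I) : 0 < l ^ L * x i := by
  simpa [pow_mulVec_eq_smul h] using mulVec_pos_of_pos_of_nonneg hm hx hx0 i

lemma apply_pos_of_mulVec_eq_smul {m : Matrix I I R} {L : ℕ} (hm : ∀ i j, 0 < (m ^ L) i j)
    {l : R} (hl : 0 ≤ l) {x : I → R} (hx : 0 ≤ x) (hx0 : x ≠ 0) (h : m *ᵥ x = l • x) (i : I) :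
    0 < x i :=
  pos_of_mul_pos_right (pow_mul_apply_pos hm hx hx0 h i) (pow_nonneg hl L)

lemma eq_of_mulVec_eq_smul_of_mem_stdSimplex [Nonempty I] {m : Matrix I I R} {L : ℕ}
    (hm : ∀ i j, 0 < (m ^ L) i j) {l : R} (hl : 0 ≤ l) {x y : I → R} (hx : x ∈ stdSimplex R I)
    (hy : y ∈ stdSimplex R I) (hmx : m *ᵥ x = l • x) (hmy : m *ᵥ y = l • y) : x = y := by
  have hxpos := apply_pos_of_mulVec_eq_smul hm hl hx.1 (ne_zero_of_mem_stdSimplex hx) hmx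
  obtain ⟨k, -, hk⟩ := exists_min_image univ (fun i => y i / x i) univ_nonempty
  set t := y k / x k
  set ν := y - t • x
  have hν : 0 ≤ ν := fun i => sub_nonneg.2 ((le_div_iff₀ (hxpos i)).1 (hk i (mem_univ i)))
  have hνk : ν k = 0 := by simp [ν, t, div_mul_cancel₀ _ (hxpos k).ne']
  have hmν : m *ᵥ ν = l • ν := by
    simp only [ν, mulVec_sub, mulVec_smul, hmx, hmy, smul_sub, smul_comm l t]
  have hν0 : ν = 0 := by
    by_contra hne
    simpa [hνk] using pow_mul_apply_pos hm hν hne hmν k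
  have hyx : y = t • x := sub_eq_zero.1 hν0
  have ht : t = 1 := by
    simpa [hx.2, hy.2, ← mul_sum] using (congrArg (fun z => ∑ i, z i) hyx).symm
  rw [hyx, ht, one_smul]

end OrderedField

section Real

def collatzWielandtSet (m : Matrix I I ℝ) : Set (ℝ × (I → ℝ)) :=
  {p | 0 ≤ p.1 ∧ p.2 ∈ stdSimplex ℝ I ∧ p.1 • p.2 ≤ m *ᵥ p.2}

lemma isCompact_collatzWielandtSet {m : Matrix I I ℝ} (hm : ∀ i j, 0 ≤ m i j) :
    IsCompact (collatzWielandtSet m) := by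
  have hbox := (isCompact_Icc (a := 0) (b := ∑ i, ∑ j, m i j)).prod (isCompact_stdSimplex ℝ I)
  refine hbox.of_isClosed_subset ?_ ?_
  · exact (isClosed_le continuous_const continuous_fst).inter
      (((isClosed_stdSimplex ℝ I).preimage continuous_snd).inter
        (isClosed_le (by fun_prop) (continuous_const.matrix_mulVec continuous_snd)))
  · rintro p ⟨h0, hx, h⟩
    exact ⟨⟨h0, le_sum_of_smul_le_mulVec hm hx h⟩, hx⟩

lemma exists_gt_smul_le_of_forall_mul_lt {l : ℝ} {w v : I → ℝ} (h : ∀ i, l * w i < v i) :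
    ∃ t > l, t • w ≤ v := by
  have hnear : ∀ᶠ t in 𝓝 l, ∀ i, t * w i < v i := eventually_all.2 fun i =>
    (continuous_id.mul continuous_const).continuousAt.eventually_lt continuousAt_const (h i)
  obtain ⟨t, ht, hlt⟩ :=
    ((hnear.filter_mono nhdsWithin_le_nhds).and (self_mem_nhdsWithin (s := Set.Ioi l))).exists
  exact ⟨t, hlt, fun i => (ht i).le⟩

variable [DecidableEq I]

lemma mulVec_eq_smul_of_isMaxOn [Nonempty I] {m : Matrix I I ℝ} {L : ℕ}
    (hm : ∀ i j, 0 < (m ^ L) i j) {p : ℝ × (I → ℝ)} (hp : p ∈ collatzWielandtSet m)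
    (hmax : IsMaxOn Prod.fst (collatzWielandtSet m) p) : m *ᵥ p.2 = p.1 • p.2 := by
  obtain ⟨l, x⟩ := p
  obtain ⟨hl, hx, hlx⟩ := hp
  by_contra hne
  set w := (m ^ L) *ᵥ x
  have hwpos := mulVec_pos_of_pos_of_nonneg hm hx.1 (ne_zero_of_mem_stdSimplex hx)
  have hw : 0 ≤ w := fun i => (hwpos i).le
  have hcomm : m *ᵥ w - l • w = (m ^ L) *ᵥ (m *ᵥ x - l • x) := by
    simp only [w, mulVec_sub, mulVec_smul, mulVec_mulVec, (Commute.self_pow m L).eq]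
  have hgap : ∀ i, l * w i < (m *ᵥ w) i := fun i => by
    simpa [← hcomm] using
      mulVec_pos_of_pos_of_nonneg hm (sub_nonneg.2 hlx) (sub_ne_zero.2 hne) i
  obtain ⟨t, htl, htw⟩ := exists_gt_smul_le_of_forall_mul_lt hgap
  have hsum : 0 < ∑ i, w i := sum_pos (fun i _ => hwpos i) univ_nonempty
  have hmem : (t, (∑ i, w i)⁻¹ • w) ∈ collatzWielandtSet m := by
    refine ⟨hl.trans htl.le, inv_sum_smul_mem_stdSimplex hw hsum.ne', ?_⟩
    rw [smul_comm, mulVec_smul]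
    exact smul_le_smul_of_nonneg_left htw (inv_nonneg.2 hsum.le)
  exact (hmax hmem).not_gt htl

theorem exists_pos_mulVec_eq_smul_mem_stdSimplex [Nonempty I] {m : Matrix I I ℝ}
    (hm : ∀ i j, 0 ≤ m i j) {L : ℕ} (hL : L ≠ 0) (hmL : ∀ i j, 0 < (m ^ L) i j) :
    ∃ l : ℝ, 0 < l ∧ ∃ x ∈ stdSimplex ℝ I, m *ᵥ x = l • x := by
  obtain ⟨i⟩ := ‹Nonempty I›
  have hne : (collatzWielandtSet m).Nonempty :=
    ⟨(0, Pi.single i 1), le_rfl, single_mem_stdSimplex ℝ i, by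
      rw [zero_smul, mulVec_single_one]
      exact fun j => hm j i⟩
  obtain ⟨⟨l, x⟩, hp, hmax⟩ :=
    (isCompact_collatzWielandtSet hm).exists_isMaxOn hne continuous_fst.continuousOn
  have hmx := mulVec_eq_smul_of_isMaxOn hmL hp hmax
  have hpos := pow_mul_apply_pos hmL hp.2.1.1 (ne_zero_of_mem_stdSimplex hp.2.1) hmx i
  refine ⟨l, hp.1.lt_of_ne ?_, x, hp.2.1, hmx⟩
  rintro rfl
  simp [zero_pow hL] at hpos

end Real

end Matrix

open Matrix

/-- Perron–Frobenius theorem for the transpose of a primitive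
nonnegative matrix: existence and uniqueness of a positive eigenvalue with a
probability eigenvector. -/
theorem stmt5 {I : Type*} [Fintype I] [DecidableEq I] [Nonempty I]
    (a : Matrix I I ℝ) (hnonneg : ∀ i j, 0 ≤ a i j)
    (hprim : ∃ L : ℕ, 1 ≤ L ∧ ∀ i j, 0 < (a ^ L) i j) :
    ∃! p : ℝ × (I → ℝ),
      0 < p.1 ∧ (∀ i, 0 ≤ p.2 i) ∧ (∑ i, p.2 i = 1) ∧
      ∀ i, ∑ j, a j i * p.2 j = p.1 * p.2 i := by
  obtain ⟨L, hL, hpos⟩ := hprim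
  have hL0 : L ≠ 0 := Nat.one_le_iff_ne_zero.1 hL
  have hposT : ∀ i j, 0 < (aᵀ ^ L) i j := fun i j => by rw [← transpose_pow]; exact hpos j i
  have heig (l : ℝ) (μ : I → ℝ) : (∀ i, ∑ j, a j i * μ j = l * μ i) ↔ aᵀ *ᵥ μ = l • μ :=
    funext_iff.symm
  obtain ⟨ρ, hρ, v, hv, hav⟩ := exists_pos_mulVec_eq_smul_mem_stdSimplex hnonneg hL0 hpos
  have hvpos := apply_pos_of_mulVec_eq_smul hpos hρ.le hv.1 (ne_zero_of_mem_stdSimplex hv) hav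
  obtain ⟨l, hl, μ, hμ, haμ⟩ :=
    exists_pos_mulVec_eq_smul_mem_stdSimplex (fun i j => hnonneg j i) hL0 hposT
  refine ⟨(l, μ), ⟨hl, hμ.1, hμ.2, (heig l μ).2 haμ⟩, ?_⟩
  rintro ⟨l', μ'⟩ ⟨-, hμ'0, hμ'1, haμ'⟩
  have hμ' : μ' ∈ stdSimplex ℝ I := ⟨hμ'0, hμ'1⟩
  obtain rfl : l' = l :=
    (eq_of_mulVec_transpose_eq_smul hvpos hav hμ'0 (ne_zero_of_mem_stdSimplex hμ')
      ((heig l' μ').1 haμ')).trans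
    (eq_of_mulVec_transpose_eq_smul hvpos hav hμ.1 (ne_zero_of_mem_stdSimplex hμ) haμ).symm
  rw [eq_of_mulVec_eq_smul_of_mem_stdSimplex hposT hl.le hμ' hμ ((heig l' μ').1 haμ') haμ]
end

section
/- Let X be a compact Hausdorff space, Ω a Hausdorff space, and π : X → Ω a surjective local homeomorphism with finite fibers. Let R = {(x,y) ∈ X × X : π(x) = π(y)} and let D : R → ℝ₊* be a continuous cocycle (D(x,y)·D(y,z) = D(x,z) on R). Then there exists a unique continuous ρ : X → ℝ₊* such that D(x,y) = ρ(x)/ρ(y) for all (x,y) ∈ R and ∑_{x ∈ π⁻¹(ω)} ρ(x) = 1 for every ω ∈ Ω. -/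
open scoped BigOperators
open Set Function Topology

/-- existence and uniqueness of the normalized potential of a
continuous multiplicative cocycle on the proper equivalence relation defined by
a surjective local homeomorphism with finite fibers. -/
theorem stmt6 {X Ω : Type*} [TopologicalSpace X] [CompactSpace X] [T2Space X]
    [TopologicalSpace Ω] [T2Space Ω]
    (π : X → Ω) (hsurj : Function.Surjective π) (hloc : IsLocalHomeomorph π)
    (hfin : ∀ ω : Ω, (π ⁻¹' {ω}).Finite)
    (D : X → X → ℝ)
    (hDpos : ∀ x y, π x = π y → 0 < D x y)
    (hDcont : ContinuousOn (fun p : X × X => D p.1 p.2) {p : X × X | π p.1 = π p.2})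
    (hcocycle : ∀ x y z, π x = π y → π y = π z → D x y * D y z = D x z) :
    ∃! ρ : X → ℝ, Continuous ρ ∧ (∀ x, 0 < ρ x) ∧
      (∀ x y, π x = π y → D x y = ρ x / ρ y) ∧
      (∀ ω : Ω, ∑ᶠ x ∈ π ⁻¹' {ω}, ρ x = 1) := by
  classical
  -- D x x = 1
  have hDone : ∀ x, D x x = 1 := by
    intro x
    have h := hcocycle x x x rfl rfl
    have hp := hDpos x x rfl
    have h1 : D x x * D x x = 1 * D x x := by linarith
    exact mul_right_cancel₀ hp.ne' h1
  -- converting finsums over fibers to finset sums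
  have key : ∀ (ω : Ω) (f : X → ℝ),
      (∑ᶠ y ∈ π ⁻¹' {ω}, f y) = ∑ y ∈ (hfin ω).toFinset, f y := by
    intro ω f
    rw [← finsum_mem_coe_finset, Set.Finite.coe_toFinset]
  -- the sum function
  set S : X → ℝ := fun x => ∑ᶠ y ∈ π ⁻¹' {π x}, D y x with hSdef
  have hSfin : ∀ x, S x = ∑ y ∈ (hfin (π x)).toFinset, D y x := fun x => key (π x) _
  have hmem_iff : ∀ (ω : Ω) (y : X), y ∈ (hfin ω).toFinset ↔ π y = ω := by
    intro ω y; rw [Set.Finite.mem_toFinset]; rfl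
  have hSpos : ∀ x, 0 < S x := by
    intro x
    rw [hSfin x]
    refine Finset.sum_pos (fun y hy => hDpos y x ((hmem_iff _ _).1 hy)) ⟨x, (hmem_iff _ _).2 rfl⟩
  have hSmul : ∀ x y, π x = π y → S y = S x * D x y := by
    intro x y h
    have h1 : S y = ∑ᶠ z ∈ π ⁻¹' {π x}, D z y := by rw [hSdef]; rw [h]
    rw [h1, key (π x) (fun z => D z y), hSfin x, Finset.sum_mul]
    refine Finset.sum_congr rfl fun z hz => ?_
    exact (hcocycle z x y ((hmem_iff _ _).1 hz) h).symm
  -- continuity of S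
  have hScont : Continuous S := by
    rw [continuous_iff_continuousAt]
    intro x₀
    have hF : (π ⁻¹' {π x₀}).Finite := hfin (π x₀)
    haveI : Finite ↥(π ⁻¹' {π x₀}) := hF.to_subtype
    haveI : Fintype ↥(π ⁻¹' {π x₀}) := Fintype.ofFinite _
    set ι := ↥(π ⁻¹' {π x₀})
    have hdisj : Pairwise (Disjoint on fun i : ι => 𝓝 (i : X)) :=
      fun i j hij => pairwise_disjoint_nhds (Subtype.coe_injective.ne hij)
    obtain ⟨t, ht, htd⟩ := hdisj.exists_mem_filter_of_disjoint
    choose e he hπe using fun i : ι => hloc (i : X)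
    set V : ι → Set X := fun i => interior (t i) ∩ (e i).source with hVdef
    have hVopen : ∀ i, IsOpen (V i) := fun i => isOpen_interior.inter (e i).open_source
    have hVmem : ∀ i, (i : X) ∈ V i := fun i => ⟨mem_interior_iff_mem_nhds.2 (ht i), he i⟩
    have hVsub : ∀ i, V i ⊆ (e i).source := fun i => inter_subset_right
    have hVd : Pairwise (Disjoint on V) := fun i j hij =>
      (htd hij).mono (inter_subset_left.trans interior_subset)
        (inter_subset_left.trans interior_subset)
    set K := (⋃ i, V i)ᶜ with hKdef
    have hKc : IsCompact (π '' K) :=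
      ((isOpen_iUnion hVopen).isClosed_compl.isCompact).image hloc.continuous
    set W := (π '' K)ᶜ ∩ ⋂ i, π '' V i with hWdef
    have hWopen : IsOpen W :=
      hKc.isClosed.isOpen_compl.inter
        (isOpen_iInter_of_finite fun i => hloc.isOpenMap _ (hVopen i))
    have hWmem : π x₀ ∈ W := by
      constructor
      · rintro ⟨k, hk, hπk⟩
        have hkf : k ∈ π ⁻¹' {π x₀} := by simpa using hπk
        exact hk (mem_iUnion.2 ⟨⟨k, hkf⟩, hVmem ⟨k, hkf⟩⟩)
      · exact mem_iInter.2 fun i => ⟨i, hVmem i, i.2⟩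
    -- sections
    set σ : ι → Ω → X := fun i ω => (e i).symm ω with hσdef
    have hsec : ∀ ω ∈ W, ∀ i, σ i ω ∈ V i ∧ π (σ i ω) = ω := by
      intro ω hω i
      obtain ⟨v, hv, hπv⟩ := mem_iInter.1 hω.2 i
      have hev : π v = e i v := congrFun (hπe i) v
      have hvs : v ∈ (e i).source := hVsub i hv
      have hσv : σ i ω = v := by
        rw [hσdef, ← hπv, hev]
        exact (e i).left_inv hvs
      rw [hσv]
      exact ⟨hv, hπv⟩
    have htarget : ∀ i, π x₀ ∈ (e i).target := by
      intro i
      obtain ⟨v, hv, hπv⟩ := mem_iInter.1 hWmem.2 i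
      have hev : π v = e i v := congrFun (hπe i) v
      rw [← hπv, hev]
      exact (e i).map_source (hVsub i hv)
    have hfiber : ∀ ω ∈ W, π ⁻¹' {ω} = Set.range fun i => σ i ω := by
      intro ω hω
      ext y
      simp only [mem_preimage, mem_singleton_iff, mem_range]
      constructor
      · intro hy
        have hyK : y ∉ K := fun hyk => hω.1 ⟨y, hyk, hy⟩
        have : y ∈ ⋃ i, V i := by simpa [hKdef] using hyK
        obtain ⟨i, hyi⟩ := mem_iUnion.1 this
        refine ⟨i, ?_⟩
        have hey : e i y = ω := by rw [← congrFun (hπe i) y, hy]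
        rw [hσdef, ← hey]
        exact (e i).left_inv (hVsub i hyi)
      · rintro ⟨i, rfl⟩
        exact (hsec ω hω i).2
    have hinj : ∀ ω ∈ W, Function.Injective fun i => σ i ω := by
      intro ω hω i j hij
      by_contra hne
      have hij' : σ i ω = σ j ω := hij
      have hj := (hsec ω hω j).1
      rw [← hij'] at hj
      exact (hVd hne).le_bot ⟨(hsec ω hω i).1, hj⟩
    -- the local formula
    have hWpre : IsOpen (π ⁻¹' W) := hWopen.preimage hloc.continuous
    have hx₀W : x₀ ∈ π ⁻¹' W := hWmem
    have hformula : ∀ x ∈ π ⁻¹' W, S x = ∑ i : ι, D (σ i (π x)) x := by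
      intro x hx
      rw [hSdef]
      simp only
      rw [hfiber (π x) hx, finsum_mem_range (hinj (π x) hx), finsum_eq_sum_of_fintype]
    -- continuity of the local formula
    have hterm : ∀ i : ι, ContinuousAt (fun x => D (σ i (π x)) x) x₀ := by
      intro i
      have hφ : ContinuousAt (fun x => (σ i (π x), x)) x₀ := by
        refine ContinuousAt.prodMk ?_ continuousAt_id
        exact ((e i).continuousAt_symm (htarget i)).comp (hloc.continuous.continuousAt)
      have hmaps : Set.MapsTo (fun x => (σ i (π x), x)) (π ⁻¹' W)
          {p : X × X | π p.1 = π p.2} := fun x hx => (hsec (π x) hx i).2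
      have hmem : (σ i (π x₀), x₀) ∈ {p : X × X | π p.1 = π p.2} :=
        (hsec (π x₀) hWmem i).2
      have hc1 : ContinuousWithinAt (fun p : X × X => D p.1 p.2)
          {p : X × X | π p.1 = π p.2} ((fun x => (σ i (π x), x)) x₀) := hDcont _ hmem
      have := ContinuousWithinAt.comp (g := fun p : X × X => D p.1 p.2) (f := fun x => (σ i (π x), x)) (t := {p : X × X | π p.1 = π p.2}) (s := π ⁻¹' W) (x := x₀) hc1 hφ.continuousWithinAt hmaps
      exact this.continuousAt (hWpre.mem_nhds hx₀W)
    have hG : ContinuousAt (fun x => ∑ i : ι, D (σ i (π x)) x) x₀ :=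
      tendsto_finset_sum _ fun i _ => hterm i
    refine hG.congr ?_
    filter_upwards [hWpre.mem_nhds hx₀W] with x hx
    exact (hformula x hx).symm
  -- the normalized potential
  refine ⟨fun x => (S x)⁻¹, ⟨?_, ?_, ?_, ?_⟩, ?_⟩
  · exact hScont.inv₀ fun x => (hSpos x).ne'
  · exact fun x => inv_pos.2 (hSpos x)
  · intro x y h
    have := hSmul x y h
    have hx := hSpos x
    have hy := hSpos y
    field_simp
    rw [mul_comm]
    linarith [this]
  · intro ω
    obtain ⟨x₀, rfl⟩ := hsurj ω
    rw [key (π x₀) (fun x => (S x)⁻¹)]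
    have : ∀ x ∈ (hfin (π x₀)).toFinset, (S x)⁻¹ = (S x₀)⁻¹ * D x x₀ := by
      intro x hx
      have hπx : π x = π x₀ := (hmem_iff _ _).1 hx
      have h1 : S x = S x₀ * D x₀ x := hSmul x₀ x hπx.symm
      have h2 : D x₀ x * D x x₀ = 1 := by rw [hcocycle x₀ x x₀ hπx.symm hπx, hDone]
      rw [h1, mul_inv]
      congr 1
      exact inv_eq_of_mul_eq_one_right h2
    rw [Finset.sum_congr rfl this, ← Finset.mul_sum, ← hSfin x₀]
    exact inv_mul_cancel₀ (hSpos x₀).ne'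
  · rintro ρ' ⟨hcont', hpos', hD', hsum'⟩
    funext x
    have h1 : (∑ y ∈ (hfin (π x)).toFinset, ρ' y) = 1 := by
      rw [← key (π x) ρ']; exact hsum' (π x)
    have h2 : ∀ y ∈ (hfin (π x)).toFinset, ρ' y = D y x * ρ' x := by
      intro y hy
      have hπy : π y = π x := (hmem_iff _ _).1 hy
      rw [hD' y x hπy, div_mul_cancel₀ _ (hpos' x).ne']
    rw [Finset.sum_congr rfl h2, ← Finset.sum_mul, ← hSfin x] at h1
    exact (inv_eq_of_mul_eq_one_right h1).symm
end

section
/- Let X be a compact Hausdorff space, π : X → Ω a surjective local homeomorphism with finite fibers onto a Hausdorff space Ω, and R the equivalence relation defined by π. If c : R → ℝ is a continuous additive cocycle (c(x,y) + c(y,z) = c(x,z)), then c is a coboundary: there exists a continuous b : X → ℝ with c(x,y) = b(x) − b(y) for all (x,y) ∈ R. -/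
/-!
Since `X` is compact and both spaces are Hausdorff, `π` is a covering map with finite fibers,
so the fiber average `b x = (1 / |π⁻¹(π x)|) ∑_{z ∈ π⁻¹(π x)} c(x, z)` is a finite sum of
continuous functions over each evenly covered open set, hence continuous. The cocycle identity
`c(x, z) = c(x, y) + c(y, z)`, averaged over the common fiber of `x` and `y`, gives
`b x = c(x, y) + b y`.
-/

open Set Topology

section FiberSum

variable {E X : Type*} [TopologicalSpace E] [TopologicalSpace X] {π : E → X}

theorem IsCoveringMap.finite_preimage_singleton [CompactSpace E] [T1Space X]
    (hπ : IsCoveringMap π) (x : X) : (π ⁻¹' {x}).Finite :=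
  (isClosed_singleton.preimage hπ.continuous).isCompact.finite
    (isDiscrete_iff_discreteTopology.mpr (hπ x).discreteTopology_fiber)

theorem Bundle.Trivialization.finsum_mem_preimage_singleton {F M : Type*} [TopologicalSpace F]
    [AddCommMonoid M] (t : Trivialization F π) {x : X} (hx : x ∈ t.baseSet) (g : E → M) :
    ∑ᶠ z ∈ π ⁻¹' {x}, g z = ∑ᶠ i : F, g (t.toOpenPartialHomeomorph.symm (x, i)) := by
  rw [← finsum_set_coe_eq_finsum_mem,
    ← finsum_comp_equiv (t.preimageSingletonHomeomorph hx).symm.toEquiv]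
  rfl

theorem IsCoveringMap.continuous_finsum_fiber {M : Type*} [AddCommMonoid M] [TopologicalSpace M]
    [ContinuousAdd M] (hπ : IsCoveringMap π) (hfin : ∀ x, (π ⁻¹' {x}).Finite) {f : E → E → M}
    (hf : ContinuousOn (fun p : E × E => f p.1 p.2) {p | π p.1 = π p.2}) :
    Continuous fun x => ∑ᶠ z ∈ π ⁻¹' {π x}, f x z := by
  refine continuous_iff_continuousAt.2 fun x₀ => ?_
  have : Nonempty (π ⁻¹' {π x₀}) := ⟨⟨x₀, rfl⟩⟩
  have : Fintype (π ⁻¹' {π x₀}) := (hfin (π x₀)).fintype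
  let t := (hπ (π x₀)).toTrivialization
  have hU : π ⁻¹' t.baseSet ∈ 𝓝 x₀ :=
    (t.open_baseSet.preimage hπ.continuous).mem_nhds (hπ (π x₀)).mem_toTrivialization_baseSet
  have hsum : ContinuousOn (fun x => ∑ i, f x (t.toOpenPartialHomeomorph.symm (π x, i)))
      (π ⁻¹' t.baseSet) := by
    refine continuousOn_finsetSum _ fun i _ => hf.comp (continuousOn_id.prodMk ?_) fun x hx => ?_
    · exact t.toOpenPartialHomeomorph.continuousOn_symm.comp
        (hπ.continuous.prodMk continuous_const).continuousOn fun _ hx => t.mem_target.2 hx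
    · exact (t.proj_symm_apply' hx).symm
  refine (hsum.continuousAt hU).congr ?_
  filter_upwards [hU] with x hx
  rw [t.finsum_mem_preimage_singleton hx, finsum_eq_sum_of_fintype]

end FiberSum

/-- The denominator is the cardinality of the fiber, written as a fiber sum so that
`IsCoveringMap.continuous_finsum_fiber` also gives its continuity. -/
noncomputable def fiberAverage {E X : Type*} (π : E → X) (c : E → E → ℝ) (x : E) : ℝ :=
  (∑ᶠ z ∈ π ⁻¹' {π x}, c x z) / ∑ᶠ z ∈ π ⁻¹' {π x}, (1 : ℝ)

section FiberAverage

variable {E X : Type*} {π : E → X} {c : E → E → ℝ}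

theorem finsum_mem_preimage_singleton_one_pos {x : E} (hfin : (π ⁻¹' {π x}).Finite) :
    0 < ∑ᶠ z ∈ π ⁻¹' {π x}, (1 : ℝ) :=
  finsum_cond_pos (fun _ _ => zero_le_one) ⟨x, rfl, one_pos⟩ (hfin.inter_of_right _)

theorem continuous_fiberAverage [TopologicalSpace E] [TopologicalSpace X]
    (hπ : IsCoveringMap π) (hfin : ∀ x, (π ⁻¹' {x}).Finite)
    (hc : ContinuousOn (fun p : E × E => c p.1 p.2) {p | π p.1 = π p.2}) :
    Continuous (fiberAverage π c) :=
  (hπ.continuous_finsum_fiber hfin hc).div₀ (hπ.continuous_finsum_fiber hfin continuousOn_const)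
    fun x => (finsum_mem_preimage_singleton_one_pos (hfin (π x))).ne'

theorem fiberAverage_sub_fiberAverage {x y : E} (hfin : (π ⁻¹' {π x}).Finite) (hxy : π x = π y)
    (hc : ∀ z, π y = π z → c x y + c y z = c x z) :
    fiberAverage π c x - fiberAverage π c y = c x y := by
  have hN := (finsum_mem_preimage_singleton_one_pos hfin).ne'
  have hsplit : ∑ᶠ z ∈ π ⁻¹' {π x}, c x z
      = c x y * ∑ᶠ z ∈ π ⁻¹' {π x}, (1 : ℝ) + ∑ᶠ z ∈ π ⁻¹' {π x}, c y z := by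
    rw [mul_finsum_mem, ← finsum_mem_add_distrib hfin]
    refine finsum_mem_congr rfl fun z hz => ?_
    rw [mul_one, hc z (hxy.symm.trans hz.symm)]
  rw [fiberAverage, fiberAverage, ← hxy, hsplit]
  field_simp
  ring

end FiberAverage

theorem stmt7_general {X Ω : Type*} [TopologicalSpace X] [CompactSpace X] [T2Space X]
    [TopologicalSpace Ω] [T2Space Ω]
    (π : X → Ω) (hloc : IsLocalHomeomorph π)
    (c : X → X → ℝ)
    (hccont : ContinuousOn (fun p : X × X => c p.1 p.2) {p : X × X | π p.1 = π p.2})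
    (hcocycle : ∀ x y z, π x = π y → π y = π z → c x y + c y z = c x z) :
    ∃ b : X → ℝ, Continuous b ∧ ∀ x y, π x = π y → c x y = b x - b y := by
  have hπ : IsCoveringMap π := isLocalHomeomorph_iff_isCoveringMap.mp hloc
  have hfin := hπ.finite_preimage_singleton
  refine ⟨fiberAverage π c, continuous_fiberAverage hπ hfin hccont, fun x y hxy => ?_⟩
  exact (fiberAverage_sub_fiberAverage (hfin _) hxy (hcocycle x y · hxy)).symm

/-- every continuous additive cocycle on the proper equivalence
relation defined by a surjective local homeomorphism with finite fibers on a
compact space is a coboundary. -/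
theorem stmt7 {X Ω : Type*} [TopologicalSpace X] [CompactSpace X] [T2Space X]
    [TopologicalSpace Ω] [T2Space Ω]
    (π : X → Ω) (hsurj : Function.Surjective π) (hloc : IsLocalHomeomorph π)
    (hfin : ∀ ω : Ω, (π ⁻¹' {ω}).Finite)
    (c : X → X → ℝ)
    (hccont : ContinuousOn (fun p : X × X => c p.1 p.2) {p : X × X | π p.1 = π p.2})
    (hcocycle : ∀ x y z, π x = π y → π y = π z → c x y + c y z = c x z) :
    ∃ b : X → ℝ, Continuous b ∧ ∀ x y, π x = π y → c x y = b x - b y :=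
  stmt7_general π hloc c hccont hcocycle
end

section
/- Let X → X₁ → X₂ be surjective local homeomorphisms π₁ : X → X₁ and π₂₁ : X₁ → X₂ between compact Hausdorff spaces, with finite fibers, and set π₂ = π₂₁ ∘ π₁. Let ρ₂, ρ₁ : X → ℝ₊* be continuous with ∑_{π₂(x)=x₂} ρ₂(x) = 1 for all x₂ ∈ X₂ and ∑_{π₁(x)=x₁} ρ₁(x) = 1 for all x₁ ∈ X₁, and suppose ρ₂(x)/ρ₂(y) = ρ₁(x)/ρ₁(y) whenever π₁(x) = π₁(y). Then there is a unique continuous ρ₂₁ : X₁ → ℝ₊* with ρ₂ = ρ₁ · (ρ₂₁ ∘ π₁), and it satisfies ∑_{π₂₁(x₁)=x₂} ρ₂₁(x₁) = 1 for all x₂ ∈ X₂. -/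
open scoped BigOperators

/-- decomposition of normalized potentials along a composition of
surjective local homeomorphisms. -/
theorem stmt9 {X X₁ X₂ : Type*}
    [TopologicalSpace X] [CompactSpace X] [T2Space X]
    [TopologicalSpace X₁] [CompactSpace X₁] [T2Space X₁]
    [TopologicalSpace X₂] [CompactSpace X₂] [T2Space X₂]
    (π₁ : X → X₁) (π₂₁ : X₁ → X₂)
    (hsurj₁ : Function.Surjective π₁) (hloc₁ : IsLocalHomeomorph π₁)
    (hfin₁ : ∀ x₁ : X₁, (π₁ ⁻¹' {x₁}).Finite)
    (hsurj₂₁ : Function.Surjective π₂₁) (hloc₂₁ : IsLocalHomeomorph π₂₁)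
    (hfin₂₁ : ∀ x₂ : X₂, (π₂₁ ⁻¹' {x₂}).Finite)
    (ρ₁ ρ₂ : X → ℝ)
    (hρ₁cont : Continuous ρ₁) (hρ₂cont : Continuous ρ₂)
    (hρ₁pos : ∀ x, 0 < ρ₁ x) (hρ₂pos : ∀ x, 0 < ρ₂ x)
    (hnorm₁ : ∀ x₁ : X₁, ∑ᶠ x ∈ π₁ ⁻¹' {x₁}, ρ₁ x = 1)
    (hnorm₂ : ∀ x₂ : X₂, ∑ᶠ x ∈ (π₂₁ ∘ π₁) ⁻¹' {x₂}, ρ₂ x = 1)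
    (hratio : ∀ x y, π₁ x = π₁ y → ρ₂ x / ρ₂ y = ρ₁ x / ρ₁ y) :
    (∃! ρ₂₁ : X₁ → ℝ, Continuous ρ₂₁ ∧ (∀ x₁, 0 < ρ₂₁ x₁) ∧
        ∀ x, ρ₂ x = ρ₁ x * ρ₂₁ (π₁ x)) ∧
    (∀ ρ₂₁ : X₁ → ℝ, Continuous ρ₂₁ → (∀ x₁, 0 < ρ₂₁ x₁) →
        (∀ x, ρ₂ x = ρ₁ x * ρ₂₁ (π₁ x)) →
        ∀ x₂ : X₂, ∑ᶠ x₁ ∈ π₂₁ ⁻¹' {x₂}, ρ₂₁ x₁ = 1) := by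
  -- the ratio function is constant on fibers of π₁
  have hr : ∀ x y, π₁ x = π₁ y → ρ₂ x / ρ₁ x = ρ₂ y / ρ₁ y := by
    intro x y h
    have := hratio x y h
    rw [div_eq_div_iff (hρ₂pos y).ne' (hρ₁pos y).ne'] at this
    rw [div_eq_div_iff (hρ₁pos x).ne' (hρ₁pos y).ne']
    linear_combination this
  set σ : X₁ → X := Function.surjInv hsurj₁ with hσ
  have hσπ : ∀ x₁, π₁ (σ x₁) = x₁ := Function.surjInv_eq hsurj₁
  set ρ₂₁ : X₁ → ℝ := fun x₁ => ρ₂ (σ x₁) / ρ₁ (σ x₁) with hρ₂₁def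
  have hcomp : ∀ x, ρ₂₁ (π₁ x) = ρ₂ x / ρ₁ x := fun x =>
    hr (σ (π₁ x)) x (hσπ _)
  have hq : Topology.IsQuotientMap π₁ :=
    (hloc₁.isOpenMap).isQuotientMap hloc₁.continuous hsurj₁
  have hcont : Continuous ρ₂₁ := by
    rw [hq.continuous_iff]
    have : ρ₂₁ ∘ π₁ = fun x => ρ₂ x / ρ₁ x := funext hcomp
    rw [this]
    exact hρ₂cont.div hρ₁cont fun x => (hρ₁pos x).ne'
  have hpos : ∀ x₁, 0 < ρ₂₁ x₁ := fun x₁ =>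
    div_pos (hρ₂pos _) (hρ₁pos _)
  have heq : ∀ x, ρ₂ x = ρ₁ x * ρ₂₁ (π₁ x) := by
    intro x
    rw [hcomp x, mul_comm, div_mul_cancel₀ _ (hρ₁pos x).ne']
  constructor
  · refine ⟨ρ₂₁, ⟨hcont, hpos, heq⟩, ?_⟩
    rintro g ⟨-, -, hg⟩
    funext x₁
    obtain ⟨x, rfl⟩ := hsurj₁ x₁
    have := (hg x).symm.trans (heq x)
    exact mul_left_cancel₀ (hρ₁pos x).ne' this
  · intro g hgc hgp hg x₂
    have hdisj : (π₂₁ ⁻¹' {x₂}).PairwiseDisjoint (fun x₁ => π₁ ⁻¹' {x₁}) := by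
      intro a _ b _ hab
      simp only [Set.disjoint_left]
      rintro x hxa hxb
      exact hab (hxa.symm.trans hxb)
    have hunion : (⋃ x₁ ∈ π₂₁ ⁻¹' {x₂}, π₁ ⁻¹' {x₁}) = (π₂₁ ∘ π₁) ⁻¹' {x₂} := by
      ext x
      simp [Set.mem_iUnion]
    have key := finsum_mem_biUnion hdisj (hfin₂₁ x₂)
      (fun x₁ _ => hfin₁ x₁) (f := ρ₂)
    rw [hunion, hnorm₂ x₂] at key
    have : ∀ x₁ ∈ π₂₁ ⁻¹' {x₂}, (∑ᶠ x ∈ π₁ ⁻¹' {x₁}, ρ₂ x) = g x₁ := by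
      intro x₁ _
      have : ∀ x ∈ π₁ ⁻¹' {x₁}, ρ₂ x = g x₁ * ρ₁ x := by
        intro x hx
        rw [hg x, hx]
        ring
      have hmul := (AddMonoidHom.mulLeft (g x₁)).map_finsum_mem ρ₁ (hfin₁ x₁)
      simp only [AddMonoidHom.coe_mulLeft] at hmul
      rw [finsum_mem_congr rfl this, ← hmul, hnorm₁ x₁, mul_one]
    rw [finsum_mem_congr rfl this] at key
    exact key.symm
end

section
/- Let π : X → Y be a surjective local homeomorphism between compact Hausdorff spaces with finite fibers, and suppose Δ ⊆ X × X is a symmetric entourage such that for every y, y' with (y,y') in an entourage δ ⊆ Y × Y there is a bijection x ↦ x' between π⁻¹(y) and π⁻¹(y') with (x,x') ∈ Δ. Let g : X → ℝ₊* be continuous with multiplicative variation var₊(g,Δ) := sup_{(x,x')∈Δ} |g(x)/g(x') − 1| < ε < 1. Let Z(y) = ∑_{π(x)=y} g(x) and ρ = g/(Z∘π). Then var₊(ρ,Δ) < 2ε/(1−ε). -/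
open scoped BigOperators

/-- control of the multiplicative variation of the normalized
potential in terms of that of the unnormalized potential. -/
theorem stmt10 {X Y : Type*}
    [TopologicalSpace X] [CompactSpace X] [T2Space X]
    [TopologicalSpace Y] [CompactSpace Y] [T2Space Y]
    (π : X → Y) (hsurj : Function.Surjective π) (hloc : IsLocalHomeomorph π)
    (hfin : ∀ y : Y, (π ⁻¹' {y}).Finite)
    (Δ : Set (X × X)) (δ : Set (Y × Y))
    (hsymm : ∀ p ∈ Δ, (p.2, p.1) ∈ Δ)
    (hΔδ : ∀ x x' : X, (x, x') ∈ Δ → (π x, π x') ∈ δ)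
    (hmatch : ∀ y y' : Y, (y, y') ∈ δ →
      ∃ e : (π ⁻¹' {y}) ≃ (π ⁻¹' {y'}), ∀ x : (π ⁻¹' {y}), ((x : X), (e x : X)) ∈ Δ)
    (g : X → ℝ) (hgcont : Continuous g) (hgpos : ∀ x, 0 < g x)
    (ε : ℝ) (hε1 : ε < 1)
    (hvar : ∀ x x' : X, (x, x') ∈ Δ → |g x / g x' - 1| < ε)
    (Z : Y → ℝ) (hZ : ∀ y, Z y = ∑ᶠ x ∈ π ⁻¹' {y}, g x)
    (ρ : X → ℝ) (hρ : ∀ x, ρ x = g x / Z (π x)) :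
    ∀ x x' : X, (x, x') ∈ Δ → |ρ x / ρ x' - 1| < 2 * ε / (1 - ε) := by
  intro x x' hxx'
  have hε0 : 0 < ε := lt_of_le_of_lt (abs_nonneg _) (hvar x x' hxx')
  have h1ε : 0 < 1 - ε := by linarith
  set y := π x with hy
  set y' := π x' with hy'
  obtain ⟨e, he⟩ := hmatch y y' (hΔδ x x' hxx')
  haveI : Fintype (π ⁻¹' {y}) := (hfin y).fintype
  haveI : Fintype (π ⁻¹' {y'}) := (hfin y').fintype
  haveI : Nonempty (π ⁻¹' {y}) := ⟨⟨x, rfl⟩⟩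
  have hZy : Z y = ∑ z : (π ⁻¹' {y} : Set X), g z := by
    rw [hZ, finsum_mem_eq_finite_toFinset_sum g (hfin y)]
    exact Finset.sum_subtype _ (by simp) g
  have hZy' : Z y' = ∑ z : (π ⁻¹' {y'} : Set X), g z := by
    rw [hZ, finsum_mem_eq_finite_toFinset_sum g (hfin y')]
    exact Finset.sum_subtype _ (by simp) g
  have hZy'2 : Z y' = ∑ z : (π ⁻¹' {y} : Set X), g (e z) := by
    rw [hZy']; exact (Equiv.sum_comp e (fun z => g (z : X))).symm
  -- termwise bounds
  have hterm : ∀ z : (π ⁻¹' {y} : Set X),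
      (1 - ε) * g (e z) < g z ∧ g z < (1 + ε) * g (e z) := by
    intro z
    have h := hvar _ _ (he z)
    have hpos := hgpos (e z : X)
    rw [abs_lt] at h
    refine ⟨(lt_div_iff₀ hpos).mp (by linarith [h.1]), ?_⟩
    exact (div_lt_iff₀ hpos).mp (by linarith [h.2])
  have hZpos' : 0 < Z y' := by
    rw [hZy'2]
    exact Finset.sum_pos (fun z _ => hgpos _) Finset.univ_nonempty
  have hZpos : 0 < Z y := by
    rw [hZy]
    exact Finset.sum_pos (fun z _ => hgpos _) Finset.univ_nonempty
  have hlow : (1 - ε) * Z y' < Z y := by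
    rw [hZy, hZy'2, Finset.mul_sum]
    exact Finset.sum_lt_sum_of_nonempty Finset.univ_nonempty fun z _ => (hterm z).1
  have hhigh : Z y < (1 + ε) * Z y' := by
    rw [hZy, hZy'2, Finset.mul_sum]
    exact Finset.sum_lt_sum_of_nonempty Finset.univ_nonempty fun z _ => (hterm z).2
  -- bounds on g x / g x'
  have hgx := hgpos x
  have hgx' := hgpos x'
  have hg := hvar x x' hxx'
  rw [abs_lt] at hg
  have hga : (1 - ε) * g x' < g x := (lt_div_iff₀ hgx').mp (by linarith [hg.1])
  have hgb : g x < (1 + ε) * g x' := (div_lt_iff₀ hgx').mp (by linarith [hg.2])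
  have hub' : (1 - ε) * (g x * Z y') < (1 + ε) * (g x' * Z y) := by
    have h1 : g x * Z y' < ((1 + ε) * g x') * Z y' :=
      mul_lt_mul_of_pos_right hgb hZpos'
    have h2 : ((1 + ε) * g x') * ((1 - ε) * Z y') < ((1 + ε) * g x') * Z y :=
      mul_lt_mul_of_pos_left hlow (by positivity)
    nlinarith [mul_pos hgx' hZpos']
  have hlb' : (1 - ε) * (g x' * Z y) < (1 + ε) * (g x * Z y') := by
    have h1 : (1 - ε) * g x' * Z y < g x * Z y := mul_lt_mul_of_pos_right hga hZpos
    have h2 : g x * Z y < g x * ((1 + ε) * Z y') := mul_lt_mul_of_pos_left hhigh hgx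
    nlinarith
  -- final computation
  have hρx : ρ x = g x / Z y := by rw [hρ]
  have hρx' : ρ x' = g x' / Z y' := by rw [hρ]
  have hratio : ρ x / ρ x' = (g x * Z y') / (g x' * Z y) := by
    rw [hρx, hρx']
    field_simp
  have hden : 0 < g x' * Z y := mul_pos hgx' hZpos
  have hAB : ρ x / ρ x' - 1 = (g x * Z y' - g x' * Z y) / (g x' * Z y) := by
    rw [hratio]; field_simp
  rw [hAB, abs_div, abs_of_pos hden, div_lt_div_iff₀ hden h1ε,
    ← abs_of_pos h1ε, ← abs_mul, abs_lt]
  have hA : 0 < g x * Z y' := mul_pos hgx hZpos'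
  constructor
  · nlinarith [hlb', mul_pos hε0 hden, mul_pos hε0 (mul_pos hε0 hden),
      mul_pos hε0 hA, mul_pos hε0 (mul_pos hε0 hA)]
  · nlinarith [hub', mul_pos hε0 hden, mul_pos hε0 hA]
end

section
/- Let π : X → Y be a surjective local homeomorphism between compact Hausdorff spaces with finite fibers, with the matched-fiber property: for (y,y') ∈ δ there is a bijection x ↦ x' between π⁻¹(y) and π⁻¹(y') with (x,x') ∈ Δ. Let ρ : X → ℝ₊* be continuous with ∑_{π(x)=y} ρ(x) = 1 for all y, and define E(f)(y) = ∑_{π(x)=y} ρ(x) f(x) for f ∈ C(X). Then for all f ∈ C(X): sup_{(y,y')∈δ} |E(f)(y) − E(f)(y')| ≤ sup_{(x,x')∈Δ} |f(x) − f(x')| + ‖f‖ · sup_{(x,x')∈Δ} |ρ(x)/ρ(x') − 1|. -/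
open scoped BigOperators

/-- Walters' Lemma 1: variation estimate for the expectation
operator defined by a normalized potential. The suprema over entourages are
expressed via arbitrary upper bounds `A` and `B`. -/
theorem stmt11 {X Y : Type*}
    [TopologicalSpace X] [CompactSpace X] [T2Space X]
    [TopologicalSpace Y] [CompactSpace Y] [T2Space Y]
    (π : X → Y) (hsurj : Function.Surjective π) (hloc : IsLocalHomeomorph π)
    (hfin : ∀ y : Y, (π ⁻¹' {y}).Finite)
    (Δ : Set (X × X)) (δ : Set (Y × Y))
    (hmatch : ∀ y y' : Y, (y, y') ∈ δ →
      ∃ e : (π ⁻¹' {y}) ≃ (π ⁻¹' {y'}), ∀ x : (π ⁻¹' {y}), ((x : X), (e x : X)) ∈ Δ)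
    (ρ : X → ℝ) (hρcont : Continuous ρ) (hρpos : ∀ x, 0 < ρ x)
    (hnorm : ∀ y : Y, ∑ᶠ x ∈ π ⁻¹' {y}, ρ x = 1)
    (f : C(X, ℝ))
    (E : Y → ℝ) (hE : ∀ y, E y = ∑ᶠ x ∈ π ⁻¹' {y}, ρ x * f x)
    (A B : ℝ)
    (hA : ∀ x x' : X, (x, x') ∈ Δ → |f x - f x'| ≤ A)
    (hB : ∀ x x' : X, (x, x') ∈ Δ → |ρ x / ρ x' - 1| ≤ B) :
    ∀ y y' : Y, (y, y') ∈ δ → |E y - E y'| ≤ A + ‖f‖ * B := by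
  intro y y' hyy'
  obtain ⟨e, he⟩ := hmatch y y' hyy'
  haveI : Fintype (π ⁻¹' {y}) := (hfin y).fintype
  haveI : Fintype (π ⁻¹' {y'}) := (hfin y').fintype
  have key : ∀ (y : Y) [Fintype (π ⁻¹' {y})] (g : X → ℝ),
      ∑ᶠ x ∈ π ⁻¹' {y}, g x = ∑ x : (π ⁻¹' {y}), g x := by
    intro y _ g
    rw [← finsum_set_coe_eq_finsum_mem, finsum_eq_sum_of_fintype]
  have hEy : E y = ∑ x : (π ⁻¹' {y}), ρ x * f x := by rw [hE, key]
  have hEy' : E y' = ∑ x : (π ⁻¹' {y}), ρ (e x) * f (e x) := by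
    rw [hE, key]
    exact (Equiv.sum_comp e (fun x : (π ⁻¹' {y'}) => ρ x * f x)).symm
  have hsum : ∑ x : (π ⁻¹' {y}), ρ (e x : X) = 1 := by
    have := hnorm y'
    rw [key] at this
    rw [← this]
    exact Equiv.sum_comp e (fun x : (π ⁻¹' {y'}) => ρ x)
  have hterm : ∀ x : (π ⁻¹' {y}),
      |ρ (x : X) * f x - ρ (e x : X) * f (e x)| ≤ ρ (e x : X) * (A + ‖f‖ * B) := by
    intro x
    have hΔ := he x
    have hpos := hρpos (e x : X)
    have h1 : ρ (x : X) * f x - ρ (e x : X) * f (e x)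
        = ρ (e x : X) * (f x - f (e x)) + (ρ (e x : X) * (ρ (x : X) / ρ (e x : X) - 1)) * f x := by
      field_simp
      ring
    rw [h1]
    calc |ρ (e x : X) * (f x - f (e x)) + (ρ (e x : X) * (ρ (x : X) / ρ (e x : X) - 1)) * f x|
        ≤ |ρ (e x : X) * (f x - f (e x))| + |(ρ (e x : X) * (ρ (x : X) / ρ (e x : X) - 1)) * f x| :=
          abs_add_le _ _
      _ = ρ (e x : X) * |f x - f (e x)| + ρ (e x : X) * |ρ (x : X) / ρ (e x : X) - 1| * |f x| := by
          rw [abs_mul, abs_mul, abs_mul, abs_of_pos hpos]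
      _ ≤ ρ (e x : X) * A + ρ (e x : X) * B * ‖f‖ := by
          have h3 : |f (x : X)| ≤ ‖f‖ := by
            simpa [Real.norm_eq_abs] using f.norm_coe_le_norm (x : X)
          have h4 : 0 ≤ B := le_trans (abs_nonneg _) (hB _ _ hΔ)
          gcongr <;> first
            | exact hA _ _ hΔ | exact hB _ _ hΔ | exact h3 | positivity
            | exact mul_nonneg hpos.le h4
      _ = ρ (e x : X) * (A + ‖f‖ * B) := by ring
  calc |E y - E y'| = |∑ x : (π ⁻¹' {y}), (ρ (x : X) * f x - ρ (e x : X) * f (e x))| := by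
        rw [hEy, hEy', Finset.sum_sub_distrib]
    _ ≤ ∑ x : (π ⁻¹' {y}), |ρ (x : X) * f x - ρ (e x : X) * f (e x)| :=
        Finset.abs_sum_le_sum_abs _ _
    _ ≤ ∑ x : (π ⁻¹' {y}), ρ (e x : X) * (A + ‖f‖ * B) :=
        Finset.sum_le_sum fun x _ => hterm x
    _ = (∑ x : (π ⁻¹' {y}), ρ (e x : X)) * (A + ‖f‖ * B) := by rw [Finset.sum_mul]
    _ = A + ‖f‖ * B := by rw [hsum, one_mul]
end

section
/- Let Xₙ be compact Hausdorff spaces and Bₙ : C(Xₙ₋₁) → C(Xₙ) Markovian operators. Let S be the set of coherent sequences of states (τₙ) with τₙ₋₁ = τₙ ∘ Bₙ. Fix m and fₘ ∈ C(Xₘ), and set fₙ = Bₙ⋯B_{m+1} fₘ for n > m. Then ‖fₙ‖ → 0 as n → ∞ if and only if τₘ(fₘ) = 0 for every (τₙ) ∈ S. -/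
open Filter

/-- Iterates `B (m+n-1) ∘ ⋯ ∘ B m` applied to `f : C(X m, ℝ)`. -/
def iterB {X : ℕ → Type*} [∀ n, TopologicalSpace (X n)]
    (B : ∀ n, C(X n, ℝ) →L[ℝ] C(X (n + 1), ℝ)) (m : ℕ) (f : C(X m, ℝ)) :
    ∀ n, C(X (m + n), ℝ)
  | 0 => f
  | n + 1 => B (m + n) (iterB B m f n)

set_option linter.unusedSectionVars false

section aux
variable {X : ℕ → Type*} [∀ n, TopologicalSpace (X n)] [∀ n, CompactSpace (X n)]

/-- Transfer operator from level `k` to level `n` (junk `0` when `n < k`). -/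
def Tr (B : ∀ n, C(X n, ℝ) →L[ℝ] C(X (n + 1), ℝ)) (k : ℕ) :
    (n : ℕ) → C(X k, ℝ) → C(X n, ℝ)
  | 0, g => if h : k = 0 then h ▸ g else 0
  | (n+1), g => if h : k = n + 1 then h ▸ g else B n (Tr B k n g)

variable (B : ∀ n, C(X n, ℝ) →L[ℝ] C(X (n + 1), ℝ))

lemma Tr_self (k : ℕ) (g : C(X k, ℝ)) : Tr B k k g = g := by
  cases k <;> simp [Tr]

lemma Tr_succ {k n : ℕ} (h : k ≤ n) (g : C(X k, ℝ)) :
    Tr B k (n+1) g = B n (Tr B k n g) := by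
  rw [Tr, dif_neg (by omega)]

lemma Tr_succ_of_ne {k n : ℕ} (hk : k ≠ n + 1) (g : C(X k, ℝ)) :
    Tr B k (n+1) g = B n (Tr B k n g) := by
  rw [Tr, dif_neg hk]

lemma Tr_of_lt {k n : ℕ} (h : n < k) (g : C(X k, ℝ)) : Tr B k n g = 0 := by
  induction n with
  | zero => rw [Tr, dif_neg (by omega)]
  | succ n ih => rw [Tr, dif_neg (by omega), ih (by omega), map_zero]

lemma Tr_add (k n : ℕ) (g h : C(X k, ℝ)) :
    Tr B k n (g + h) = Tr B k n g + Tr B k n h := by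
  induction n with
  | zero =>
    by_cases hk : k = 0
    · subst hk; simp [Tr_self]
    · simp [Tr, hk]
  | succ n ih =>
    by_cases hk : k = n + 1
    · subst hk; simp [Tr_self]
    · simp only [Tr_succ_of_ne B hk, ih, map_add]

lemma Tr_smul (k n : ℕ) (c : ℝ) (g : C(X k, ℝ)) :
    Tr B k n (c • g) = c • Tr B k n g := by
  induction n with
  | zero =>
    by_cases hk : k = 0
    · subst hk; simp [Tr_self]
    · simp [Tr, hk]
  | succ n ih =>
    by_cases hk : k = n + 1
    · subst hk; simp [Tr_self]
    · simp only [Tr_succ_of_ne B hk, ih, map_smul]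

lemma Tr_pos (hBpos : ∀ n (f : C(X n, ℝ)), (∀ x, 0 ≤ f x) → ∀ y, 0 ≤ B n f y)
    (k n : ℕ) (g : C(X k, ℝ)) (hg : ∀ x, 0 ≤ g x) : ∀ x, 0 ≤ Tr B k n g x := by
  induction n with
  | zero =>
    by_cases hk : k = 0
    · subst hk; rw [Tr_self]; exact hg
    · intro x; simp [Tr, hk]
  | succ n ih =>
    by_cases hk : k = n + 1
    · subst hk; rw [Tr_self]; exact hg
    · intro x; rw [Tr_succ_of_ne B hk]; exact hBpos n _ ih x

lemma Tr_one (hBone : ∀ n, B n 1 = 1) {k n : ℕ} (h : k ≤ n) :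
    Tr B k n (1 : C(X k, ℝ)) = 1 := by
  induction n with
  | zero => interval_cases k; exact Tr_self B 0 1
  | succ n ih =>
    rcases Nat.eq_or_lt_of_le h with h' | h'
    · subst h'; exact Tr_self B _ 1
    · rw [Tr_succ B (by omega), ih (by omega), hBone]

lemma markov_bound (hBpos : ∀ n (f : C(X n, ℝ)), (∀ x, 0 ≤ f x) → ∀ y, 0 ≤ B n f y)
    (hBone : ∀ n, B n 1 = 1) (n : ℕ) (g : C(X n, ℝ)) {c : ℝ}
    (hc : ∀ x, |g x| ≤ c) : ∀ y, |B n g y| ≤ c := by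
  intro y
  have h1 : ∀ x, (0:ℝ) ≤ (c • (1 : C(X n, ℝ)) - g) x := by
    intro x; simp; have := hc x; rw [abs_le] at this; linarith [this.2]
  have h2 : ∀ x, (0:ℝ) ≤ (c • (1 : C(X n, ℝ)) + g) x := by
    intro x; simp; have := hc x; rw [abs_le] at this; linarith [this.1]
  have k1 := hBpos n _ h1 y
  have k2 := hBpos n _ h2 y
  rw [map_sub, map_smul, hBone] at k1
  rw [map_add, map_smul, hBone] at k2
  simp only [ContinuousMap.sub_apply, ContinuousMap.add_apply, ContinuousMap.smul_apply,
    ContinuousMap.one_apply, smul_eq_mul, mul_one] at k1 k2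
  rw [abs_le]; constructor <;> linarith

lemma Tr_bound (hBpos : ∀ n (f : C(X n, ℝ)), (∀ x, 0 ≤ f x) → ∀ y, 0 ≤ B n f y)
    (hBone : ∀ n, B n 1 = 1) (k n : ℕ) (g : C(X k, ℝ)) :
    ∀ x, |Tr B k n g x| ≤ ‖g‖ := by
  induction n with
  | zero =>
    by_cases hk : k = 0
    · subst hk; rw [Tr_self]; exact fun x => g.norm_coe_le_norm x
    · intro x; simp [Tr, hk, norm_nonneg]
  | succ n ih =>
    by_cases hk : k = n + 1
    · subst hk; rw [Tr_self]; exact fun x => g.norm_coe_le_norm x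
    · rw [Tr_succ_of_ne B hk]; exact fun x => markov_bound B hBpos hBone n _ ih x

lemma Tr_comm {k n : ℕ} (h : k + 1 ≤ n) (g : C(X k, ℝ)) :
    Tr B (k+1) n (B k g) = Tr B k n g := by
  induction n with
  | zero => omega
  | succ n ih =>
    rcases Nat.eq_or_lt_of_le h with h' | h'
    · rw [← h', Tr_self, Tr_succ B (by omega), Tr_self]
    · rw [Tr_succ B (by omega), Tr_succ B (by omega), ih (by omega)]

lemma Tr_iterB (m : ℕ) (f : C(X m, ℝ)) (n : ℕ) :
    Tr B m (m + n) f = iterB B m f n := by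
  induction n with
  | zero => exact Tr_self B m f
  | succ n ih =>
    show Tr B m ((m + n) + 1) f = _
    rw [Tr_succ B (by omega), ih]
    rfl

end aux

/-- key lemma: ‖Bₙ⋯B_{m+1} fₘ‖ → 0 iff every coherent sequence of
states kills fₘ. -/
theorem stmt13 {X : ℕ → Type*} [∀ n, TopologicalSpace (X n)] [∀ n, CompactSpace (X n)]
    [∀ n, T2Space (X n)] [∀ n, Nonempty (X n)]
    (B : ∀ n, C(X n, ℝ) →L[ℝ] C(X (n + 1), ℝ))
    (hBpos : ∀ n (f : C(X n, ℝ)), (∀ x, 0 ≤ f x) → ∀ y, 0 ≤ B n f y)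
    (hBone : ∀ n, B n 1 = 1)
    (m : ℕ) (f : C(X m, ℝ)) :
    Tendsto (fun n => ‖iterB B m f n‖) atTop (nhds 0) ↔
      ∀ τ : ∀ n, C(X n, ℝ) →ₗ[ℝ] ℝ,
        (∀ n (g : C(X n, ℝ)), (∀ x, 0 ≤ g x) → 0 ≤ τ n g) →
        (∀ n, τ n 1 = 1) →
        (∀ n (g : C(X n, ℝ)), τ n g = τ (n + 1) (B n g)) →
        τ m f = 0 := by
  constructor
  · intro h τ hpos hone hcoh
    -- states are norm-bounded
    have hbdd : ∀ k (g : C(X k, ℝ)), |τ k g| ≤ ‖g‖ := by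
      intro k g
      have h1 : 0 ≤ τ k (‖g‖ • (1 : C(X k, ℝ)) - g) := by
        apply hpos
        intro x
        have := g.norm_coe_le_norm x
        simp only [ContinuousMap.sub_apply, ContinuousMap.smul_apply,
          ContinuousMap.one_apply, smul_eq_mul, mul_one, sub_nonneg]
        exact le_trans (le_abs_self _) this
      have h2 : 0 ≤ τ k (‖g‖ • (1 : C(X k, ℝ)) + g) := by
        apply hpos
        intro x
        have := g.norm_coe_le_norm x
        simp only [ContinuousMap.add_apply, ContinuousMap.smul_apply,
          ContinuousMap.one_apply, smul_eq_mul, mul_one]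
        have := neg_abs_le (g x)
        have h3 := abs_le.mp (g.norm_coe_le_norm x)
        linarith [h3.1]
      rw [map_sub, map_smul, hone, smul_eq_mul, mul_one] at h1
      rw [map_add, map_smul, hone, smul_eq_mul, mul_one] at h2
      rw [abs_le]; constructor <;> linarith
    have key : ∀ n, τ m f = τ (m + n) (iterB B m f n) := by
      intro n
      induction n with
      | zero => rfl
      | succ n ih => rw [ih]; exact hcoh (m + n) (iterB B m f n)
    have hle : ∀ n, |τ m f| ≤ ‖iterB B m f n‖ := fun n => (key n) ▸ hbdd (m + n) _
    have : |τ m f| ≤ 0 := ge_of_tendsto h (Eventually.of_forall hle)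
    have := abs_nonneg (τ m f)
    have : |τ m f| = 0 := le_antisymm ‹|τ m f| ≤ 0› this
    exact abs_eq_zero.mp this
  · intro H
    by_contra hnot
    -- the norms are antitone, so they converge to the infimum c; c > 0
    set a : ℕ → ℝ := fun n => ‖iterB B m f n‖ with ha
    have hanti : Antitone a := by
      apply antitone_nat_of_succ_le
      intro n
      show ‖B (m+n) (iterB B m f n)‖ ≤ ‖iterB B m f n‖
      apply ContinuousMap.norm_le _ (norm_nonneg _) |>.mpr
      intro x
      exact markov_bound B hBpos hBone (m+n) _ (fun y => (iterB B m f n).norm_coe_le_norm y) x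
    have hbdd0 : BddBelow (Set.range a) := ⟨0, fun x ⟨n, hn⟩ => hn ▸ norm_nonneg _⟩
    have hconv : Tendsto a atTop (nhds (⨅ n, a n)) := tendsto_atTop_ciInf hanti hbdd0
    set c := ⨅ n, a n with hc
    have hc0 : 0 ≤ c := le_ciInf fun n => norm_nonneg _
    have hcpos : 0 < c := by
      rcases lt_or_eq_of_le hc0 with h | h
      · exact h
      · exact absurd (h ▸ hconv) hnot
    -- choose norm-attaining points
    have hy : ∀ j, ∃ y : X (m + j), |iterB B m f j y| = ‖iterB B m f j‖ := by
      intro j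
      obtain ⟨y, -, hy⟩ := (isCompact_univ : IsCompact (Set.univ : Set (X (m + j)))).exists_isMaxOn
        Set.univ_nonempty
        (Continuous.continuousOn ((iterB B m f j).continuous.abs))
      refine ⟨y, le_antisymm ((iterB B m f j).norm_coe_le_norm y) ?_⟩
      exact (ContinuousMap.norm_le _ (abs_nonneg _)).mpr fun z => by
        simpa using hy (Set.mem_univ z)
    choose y hy using hy
    -- an ultrafilter extending atTop
    obtain ⟨U, hU⟩ := Filter.exists_ultrafilter_le (atTop : Filter ℕ)
    set σ : ℕ → ∀ k, C(X k, ℝ) → ℝ := fun j k g => Tr B k (m + j) g (y j) with hσ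
    have hσbdd : ∀ j k (g : C(X k, ℝ)), |σ j k g| ≤ ‖g‖ :=
      fun j k g => Tr_bound B hBpos hBone k (m+j) g (y j)
    have hlim : ∀ k (g : C(X k, ℝ)), ∃ L, Tendsto (fun j => σ j k g) U (nhds L) := by
      intro k g
      have hmem : ∀ j, σ j k g ∈ Set.Icc (-‖g‖) ‖g‖ := by
        intro j
        have := abs_le.mp (hσbdd j k g)
        exact Set.mem_Icc.mpr this
      have hle : ↑(U.map (fun j => σ j k g)) ≤ 𝓟 (Set.Icc (-‖g‖) ‖g‖) := by
        rw [Ultrafilter.coe_map, le_principal_iff, mem_map]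
        exact Eventually.of_forall hmem
      obtain ⟨L, -, hL⟩ := (isCompact_Icc (a := -‖g‖) (b := ‖g‖)).ultrafilter_le_nhds
        (U.map (fun j => σ j k g)) hle
      refine ⟨L, ?_⟩
      rwa [Ultrafilter.coe_map] at hL
    choose τ0 hτ0 using hlim
    have uniq : ∀ {k} {g : C(X k, ℝ)} {L}, Tendsto (fun j => σ j k g) U (nhds L) → τ0 k g = L :=
      fun {k g L} hL => tendsto_nhds_unique (hτ0 k g) hL
    set τ : ∀ k, C(X k, ℝ) →ₗ[ℝ] ℝ := fun k =>
      { toFun := τ0 k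
        map_add' := by
          intro g h
          apply uniq
          have : (fun j => σ j k (g + h)) = fun j => σ j k g + σ j k h := by
            funext j
            simp only [hσ, Tr_add, ContinuousMap.add_apply]
          rw [this]
          exact (hτ0 k g).add (hτ0 k h)
        map_smul' := by
          intro r g
          apply uniq
          have : (fun j => σ j k (r • g)) = fun j => r * σ j k g := by
            funext j
            simp only [hσ, Tr_smul, ContinuousMap.smul_apply, smul_eq_mul]
          rw [this]
          simpa using (hτ0 k g).const_mul r } with hτ
    have hτ0eq : ∀ k (g : C(X k, ℝ)), τ k g = τ0 k g := fun k g => rfl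
    have hτpos : ∀ k (g : C(X k, ℝ)), (∀ x, 0 ≤ g x) → 0 ≤ τ k g := by
      intro k g hg
      rw [hτ0eq]
      exact ge_of_tendsto (hτ0 k g)
        (Eventually.of_forall fun j => Tr_pos B hBpos k (m+j) g hg (y j))
    have hτone : ∀ k, τ k 1 = 1 := by
      intro k
      rw [hτ0eq]
      apply uniq
      have hev : ∀ᶠ j in (U : Filter ℕ), σ j k 1 = 1 := by
        apply hU
        filter_upwards [eventually_ge_atTop k] with j hj
        simp only [hσ, Tr_one B hBone (by omega : k ≤ m + j), ContinuousMap.one_apply]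
      exact (tendsto_congr' hev).mpr tendsto_const_nhds
    have hτcoh : ∀ k (g : C(X k, ℝ)), τ k g = τ (k+1) (B k g) := by
      intro k g
      rw [hτ0eq, hτ0eq]
      rw [uniq (hτ0 k g)]
      apply (uniq _).symm
      have hev : ∀ᶠ j in (U : Filter ℕ), σ j (k+1) (B k g) = σ j k g := by
        apply hU
        filter_upwards [eventually_ge_atTop (k+1)] with j hj
        simp only [hσ, Tr_comm B (by omega : k + 1 ≤ m + j)]
      exact (tendsto_congr' hev).mpr (hτ0 k g)
    have hzero : τ m f = 0 := H τ hτpos hτone hτcoh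
    -- but |τ m f| = c > 0
    have h1 : Tendsto (fun j => |σ j m f|) U (nhds |τ0 m f|) := (hτ0 m f).abs
    have h2 : (fun j => |σ j m f|) = a := by
      funext j
      simp only [hσ, Tr_iterB B m f j, ha]
      exact hy j
    have h3 : Tendsto a U (nhds c) := hconv.mono_left hU
    rw [h2] at h1
    have : |τ0 m f| = c := tendsto_nhds_unique h1 h3
    rw [hτ0eq] at hzero
    rw [hzero] at this
    simp at this
    exact absurd this.symm (ne_of_gt hcpos)
end

section
/- Let Xₙ be compact Hausdorff spaces and Bₙ : C(Xₙ₋₁) → C(Xₙ) Markovian operators. The following are equivalent: (1) for all m and all f ∈ C(Xₘ), var(Bₙ⋯B_{m+1} f) → 0, where var(g) = max g − min g; (2) for all m and all f ∈ C(Xₘ), there exists μₘ(f) ∈ ℝ with ‖Bₙ⋯B_{m+1}f − μₘ(f)·1‖ → 0; (3) the set S of coherent sequences of states (τₙ) (with τₙ₋₁ = τₙ∘Bₙ) has exactly one element. -/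
open Filter

/-- Variation of a continuous function: max minus min. -/
noncomputable def cvar {Y : Type*} [TopologicalSpace Y] (f : C(Y, ℝ)) : ℝ :=
  sSup (Set.range f) - sInf (Set.range f)

open Set

section minimax
variable {Y : Type*} [TopologicalSpace Y] [CompactSpace Y] [Nonempty Y]

lemma csSup_range_mem (g : C(Y, ℝ)) : sSup (range g) ∈ range g :=
  (isCompact_range g.continuous).sSup_mem (range_nonempty _)

lemma csInf_range_mem (g : C(Y, ℝ)) : sInf (range g) ∈ range g :=
  (isCompact_range g.continuous).sInf_mem (range_nonempty _)

omit [Nonempty Y] in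
lemma le_csSup_range (g : C(Y, ℝ)) (y : Y) : g y ≤ sSup (range g) :=
  le_csSup (isCompact_range g.continuous).bddAbove ⟨y, rfl⟩

omit [Nonempty Y] in
lemma csInf_range_le (g : C(Y, ℝ)) (y : Y) : sInf (range g) ≤ g y :=
  csInf_le (isCompact_range g.continuous).bddBelow ⟨y, rfl⟩

omit [Nonempty Y] in
lemma state_bound (σ : C(Y, ℝ) →ₗ[ℝ] ℝ)
    (hpos : ∀ g : C(Y, ℝ), (∀ x, 0 ≤ g x) → 0 ≤ σ g) (hone : σ 1 = 1)
    (h : C(Y, ℝ)) : |σ h| ≤ ‖h‖ := by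
  have h1 : 0 ≤ σ (‖h‖ • (1 : C(Y, ℝ)) - h) := by
    refine hpos _ fun x => ?_
    have := le_of_abs_le (h.norm_coe_le_norm x)
    simp only [ContinuousMap.sub_apply, ContinuousMap.smul_apply, ContinuousMap.one_apply,
      smul_eq_mul, mul_one]
    linarith
  have h2 : 0 ≤ σ (‖h‖ • (1 : C(Y, ℝ)) + h) := by
    refine hpos _ fun x => ?_
    have := neg_le_of_abs_le (h.norm_coe_le_norm x)
    simp only [ContinuousMap.add_apply, ContinuousMap.smul_apply, ContinuousMap.one_apply,
      smul_eq_mul, mul_one]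
    linarith
  rw [map_sub, map_smul, hone, smul_eq_mul, mul_one] at h1
  rw [map_add, map_smul, hone, smul_eq_mul, mul_one] at h2
  rw [abs_le]; constructor <;> linarith

omit [CompactSpace Y] [Nonempty Y] in
lemma state_const (σ : C(Y, ℝ) →ₗ[ℝ] ℝ) (hone : σ 1 = 1) (c : ℝ) :
    σ (ContinuousMap.const Y c) = c := by
  have : ContinuousMap.const Y c = c • (1 : C(Y, ℝ)) := by ext y; simp
  rw [this, map_smul, hone, smul_eq_mul, mul_one]

end minimax

section helpers
variable {X : ℕ → Type*} [∀ n, TopologicalSpace (X n)]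
  (B : ∀ n, C(X n, ℝ) →L[ℝ] C(X (n + 1), ℝ))

lemma iterB_add (m : ℕ) (f g : C(X m, ℝ)) (n : ℕ) :
    iterB B m (f + g) n = iterB B m f n + iterB B m g n := by
  induction n with
  | zero => rfl
  | succ n ih => simp [iterB, ih, map_add]

lemma iterB_smul (m : ℕ) (c : ℝ) (f : C(X m, ℝ)) (n : ℕ) :
    iterB B m (c • f) n = c • iterB B m f n := by
  induction n with
  | zero => rfl
  | succ n ih => simp [iterB, ih, map_smul]

lemma iterB_sub (m : ℕ) (f g : C(X m, ℝ)) (n : ℕ) :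
    iterB B m (f - g) n = iterB B m f n - iterB B m g n := by
  induction n with
  | zero => rfl
  | succ n ih => simp [iterB, ih, map_sub]

lemma iterB_one (hBone : ∀ n, B n 1 = 1) (m n : ℕ) : iterB B m (1 : C(X m, ℝ)) n = 1 := by
  induction n with
  | zero => rfl
  | succ n ih => simp [iterB, ih, hBone]

lemma iterB_pos (hBpos : ∀ n (f : C(X n, ℝ)), (∀ x, 0 ≤ f x) → ∀ y, 0 ≤ B n f y)
    (m : ℕ) (f : C(X m, ℝ)) (hf : ∀ x, 0 ≤ f x) (n : ℕ) :
    ∀ y, 0 ≤ iterB B m f n y := by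
  induction n with
  | zero => exact hf
  | succ n ih => exact hBpos _ _ ih

lemma iterB_le_of_le (hBpos : ∀ n (f : C(X n, ℝ)), (∀ x, 0 ≤ f x) → ∀ y, 0 ≤ B n f y)
    (hBone : ∀ n, B n 1 = 1) (m : ℕ) (f : C(X m, ℝ)) (c : ℝ) (hf : ∀ x, f x ≤ c) (n : ℕ) :
    ∀ y, iterB B m f n y ≤ c := by
  intro y
  have h0 : ∀ x, (0:ℝ) ≤ (c • (1 : C(X m, ℝ)) - f) x := by
    intro x; simp [sub_nonneg, hf x]
  have := iterB_pos B hBpos m _ h0 n y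
  rw [iterB_sub, iterB_smul, iterB_one B hBone] at this
  simpa [sub_nonneg] using this

lemma iterB_ge_of_ge (hBpos : ∀ n (f : C(X n, ℝ)), (∀ x, 0 ≤ f x) → ∀ y, 0 ≤ B n f y)
    (hBone : ∀ n, B n 1 = 1) (m : ℕ) (f : C(X m, ℝ)) (c : ℝ) (hf : ∀ x, c ≤ f x) (n : ℕ) :
    ∀ y, c ≤ iterB B m f n y := by
  intro y
  have h0 : ∀ x, (0:ℝ) ≤ (f - c • (1 : C(X m, ℝ))) x := by
    intro x; simp [sub_nonneg, hf x]
  have := iterB_pos B hBpos m _ h0 n y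
  rw [iterB_sub, iterB_smul, iterB_one B hBone] at this
  simpa [sub_nonneg] using this

lemma appB_heq {a b : ℕ} (h : a = b) (g : C(X a, ℝ)) (g' : C(X b, ℝ)) (hg : HEq g g') :
    HEq (B a g) (B b g') := by subst h; rw [eq_of_heq hg]

lemma eval_heq {a b : ℕ} (h : a = b) (g : C(X a, ℝ)) (g' : C(X b, ℝ)) (hg : HEq g g')
    (y : X a) (y' : X b) (hy : HEq y y') : g y = g' y' := by
  subst h; rw [eq_of_heq hg, eq_of_heq hy]

lemma iterB_shift (m : ℕ) (f : C(X m, ℝ)) (k : ℕ) :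
    HEq (iterB B (m + 1) (B m f) k) (iterB B m f (k + 1)) := by
  induction k with
  | zero => rfl
  | succ k ih =>
    show HEq (B ((m+1)+k) (iterB B (m+1) (B m f) k)) (B (m+(k+1)) (iterB B m f (k+1)))
    exact appB_heq B (by omega) _ _ ih

lemma state_iter (σ : ∀ n, C(X n, ℝ) →ₗ[ℝ] ℝ)
    (hcoh : ∀ n (g : C(X n, ℝ)), σ n g = σ (n + 1) (B n g)) (n : ℕ) (g : C(X n, ℝ)) (k : ℕ) :
    σ n g = σ (n + k) (iterB B n g k) := by
  induction k with
  | zero => rfl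
  | succ k ih => rw [ih, hcoh (n + k)]; rfl

end helpers

section states
variable {X : ℕ → Type*} [∀ n, TopologicalSpace (X n)] [∀ n, CompactSpace (X n)]
  [∀ n, Nonempty (X n)]
  (B : ∀ n, C(X n, ℝ) →L[ℝ] C(X (n + 1), ℝ))

/-- chosen evaluation point, cast to the right type -/
noncomputable def evpt {X : ℕ → Type*} [∀ n, TopologicalSpace (X n)] [∀ n, Nonempty (X n)]
    (x : ∀ N, X N) (n N : ℕ) : X (n + (N - n)) :=
  if h : n ≤ N then cast (congrArg X (by omega)) (x N) else Classical.arbitrary _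

noncomputable def tN (x : ∀ N, X N) (N n : ℕ) (g : C(X n, ℝ)) : ℝ :=
  iterB B n g (N - n) (evpt x n N)

/-- a sequence of points at levels `m + k`, recast as points of every `X N`. -/
noncomputable def xof {X : ℕ → Type*} [∀ n, TopologicalSpace (X n)] [∀ n, Nonempty (X n)]
    (m : ℕ) (y : ∀ k, X (m + k)) (N : ℕ) : X N :=
  if h : m ≤ N then cast (congrArg X (by omega : m + (N - m) = N)) (y (N - m))
  else Classical.arbitrary _

lemma evpt_xof {X : ℕ → Type*} [∀ n, TopologicalSpace (X n)] [∀ n, Nonempty (X n)]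
    (m : ℕ) (y : ∀ k, X (m + k)) (N : ℕ) (h : m ≤ N) :
    evpt (xof m y) m N = y (N - m) := by
  rw [evpt, dif_pos h, xof, dif_pos h]
  exact eq_of_heq ((cast_heq _ _).trans (cast_heq _ _))

lemma tN_coh (x : ∀ N, X N) (N n : ℕ) (g : C(X n, ℝ)) (h : n + 1 ≤ N) :
    tN B x N n g = tN B x N (n + 1) (B n g) := by
  have hk : N - n = (N - (n+1)) + 1 := by omega
  have hg1 : HEq (iterB B n g (N - n)) (iterB B n g ((N - (n+1)) + 1)) := by rw [hk]
  have hg : HEq (iterB B n g (N - n)) (iterB B (n+1) (B n g) (N - (n+1))) :=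
    hg1.trans (iterB_shift B n g (N - (n+1))).symm
  have hy : HEq (evpt x n N) (evpt x (n+1) N) := by
    rw [evpt, dif_pos (by omega : n ≤ N), evpt, dif_pos h]
    exact (cast_heq _ _).trans (cast_heq _ _).symm
  exact eval_heq (by omega) _ _ hg _ _ hy

lemma exists_coherent (hBpos : ∀ n (f : C(X n, ℝ)), (∀ x, 0 ≤ f x) → ∀ y, 0 ≤ B n f y)
    (hBone : ∀ n, B n 1 = 1) (x : ∀ N, X N) :
    ∃ τ : ∀ n, C(X n, ℝ) →ₗ[ℝ] ℝ,
      ((∀ n (g : C(X n, ℝ)), (∀ z, 0 ≤ g z) → 0 ≤ τ n g) ∧ (∀ n, τ n 1 = 1) ∧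
       (∀ n (g : C(X n, ℝ)), τ n g = τ (n + 1) (B n g))) ∧
      ∀ n (g : C(X n, ℝ)),
        Tendsto (fun N => tN B x N n g) (Ultrafilter.of (atTop : Filter ℕ)) (nhds (τ n g)) := by
  set U : Ultrafilter ℕ := Ultrafilter.of atTop with hUdef
  have hlim : ∀ n (g : C(X n, ℝ)), ∃ c, Tendsto (fun N => tN B x N n g) ↑U (nhds c) := by
    intro n g
    have hbd : ∀ N, tN B x N n g ∈ Icc (-‖g‖) ‖g‖ := by
      intro N
      constructor
      · exact iterB_ge_of_ge B hBpos hBone n g _ (fun z => neg_le_of_abs_le (g.norm_coe_le_norm z)) _ _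
      · exact iterB_le_of_le B hBpos hBone n g _ (fun z => le_of_abs_le (g.norm_coe_le_norm z)) _ _
    obtain ⟨c, -, hc⟩ := (isCompact_Icc (a := -‖g‖) (b := ‖g‖)).ultrafilter_le_nhds
      (U.map (fun N => tN B x N n g))
      (by rw [Ultrafilter.coe_map, le_principal_iff]; exact mem_map.mpr (univ_mem' hbd))
    exact ⟨c, by rwa [Ultrafilter.coe_map] at hc⟩
  choose cf hcf using hlim
  refine ⟨fun n => ⟨⟨cf n, ?_⟩, ?_⟩, ⟨?_, ?_, ?_⟩, hcf⟩
  · intro g h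
    refine tendsto_nhds_unique (hcf n (g + h)) ?_
    have := (hcf n g).add (hcf n h)
    refine this.congr fun N => ?_
    simp [tN, iterB_add]
  · intro c g
    refine tendsto_nhds_unique (hcf n (c • g)) ?_
    have := (hcf n g).const_mul c
    refine this.congr fun N => ?_
    simp [tN, iterB_smul]
  · intro n g hg
    exact ge_of_tendsto (hcf n g)
      (Eventually.of_forall fun N => iterB_pos B hBpos n g hg _ _)
  · intro n
    refine tendsto_nhds_unique (hcf n 1) ?_
    have : (fun N => tN B x N n (1 : C(X n, ℝ))) = fun _ => (1:ℝ) := by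
      funext N; simp [tN, iterB_one B hBone]
    rw [this]; exact tendsto_const_nhds
  · intro n g
    refine tendsto_nhds_unique ((hcf n g).congr' ?_) (hcf (n+1) (B n g))
    have hev : ∀ᶠ N in (atTop : Filter ℕ), tN B x N n g = tN B x N (n+1) (B n g) :=
      eventually_atTop.mpr ⟨n+1, fun N hN => tN_coh B x N n g hN⟩
    exact hev.filter_mono (Ultrafilter.of_le _)

end states
/-- equivalence between variation convergence, uniform convergence
to constants, and uniqueness of the coherent state. -/
theorem stmt14 {X : ℕ → Type*} [∀ n, TopologicalSpace (X n)] [∀ n, CompactSpace (X n)]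
    [∀ n, T2Space (X n)] [∀ n, Nonempty (X n)]
    (B : ∀ n, C(X n, ℝ) →L[ℝ] C(X (n + 1), ℝ))
    (hBpos : ∀ n (f : C(X n, ℝ)), (∀ x, 0 ≤ f x) → ∀ y, 0 ≤ B n f y)
    (hBone : ∀ n, B n 1 = 1) :
    ((∀ m (f : C(X m, ℝ)), Tendsto (fun n => cvar (iterB B m f n)) atTop (nhds 0)) ↔
      (∀ m (f : C(X m, ℝ)), ∃ c : ℝ,
        Tendsto (fun n => ‖iterB B m f n - ContinuousMap.const (X (m + n)) c‖)
          atTop (nhds 0))) ∧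
    ((∀ m (f : C(X m, ℝ)), ∃ c : ℝ,
        Tendsto (fun n => ‖iterB B m f n - ContinuousMap.const (X (m + n)) c‖)
          atTop (nhds 0)) ↔
      (∃! τ : ∀ n, C(X n, ℝ) →ₗ[ℝ] ℝ,
        (∀ n (g : C(X n, ℝ)), (∀ x, 0 ≤ g x) → 0 ≤ τ n g) ∧
        (∀ n, τ n 1 = 1) ∧
        (∀ n (g : C(X n, ℝ)), τ n g = τ (n + 1) (B n g)))) := by
  -- basic facts about the max/min sequences
  have hMt : ∀ m (f : C(X m, ℝ)), Antitone fun n => sSup (Set.range (iterB B m f n)) := by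
    intro m f
    refine antitone_nat_of_succ_le fun n => csSup_le (Set.range_nonempty _) ?_
    rintro _ ⟨y, rfl⟩
    exact iterB_le_of_le B hBpos hBone (m + n) (iterB B m f n) _
      (fun z => le_csSup_range _ z) 1 y
  have hIt : ∀ m (f : C(X m, ℝ)), Monotone fun n => sInf (Set.range (iterB B m f n)) := by
    intro m f
    refine monotone_nat_of_le_succ fun n => le_csInf (Set.range_nonempty _) ?_
    rintro _ ⟨y, rfl⟩
    exact iterB_ge_of_ge B hBpos hBone (m + n) (iterB B m f n) _
      (fun z => csInf_range_le _ z) 1 y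
  have hIM : ∀ m (f : C(X m, ℝ)) n,
      sInf (Set.range (iterB B m f n)) ≤ sSup (Set.range (iterB B m f n)) := fun m f n =>
    (csInf_range_le _ (Classical.arbitrary _)).trans (le_csSup_range _ (Classical.arbitrary _))
  have hcvar : ∀ m (f : C(X m, ℝ)) n, cvar (iterB B m f n) =
      sSup (Set.range (iterB B m f n)) - sInf (Set.range (iterB B m f n)) := fun _ _ _ => rfl
  have part12 : (∀ m (f : C(X m, ℝ)), Tendsto (fun n => cvar (iterB B m f n)) atTop (nhds 0)) ↔
      (∀ m (f : C(X m, ℝ)), ∃ c : ℝ,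
        Tendsto (fun n => ‖iterB B m f n - ContinuousMap.const (X (m + n)) c‖)
          atTop (nhds 0)) := by
    constructor
    · intro h1 m f
      set M : ℕ → ℝ := fun n => sSup (Set.range (iterB B m f n)) with hM
      set I : ℕ → ℝ := fun n => sInf (Set.range (iterB B m f n)) with hI
      have hbddI : BddAbove (Set.range I) := by
        refine ⟨M 0, ?_⟩
        rintro _ ⟨n, rfl⟩
        exact (hIM m f n).trans (hMt m f (Nat.zero_le n))
      refine ⟨⨆ n, I n, squeeze_zero (g := fun n => M n - I n) (fun n => norm_nonneg _) ?_ ?_⟩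
      · intro n
        have hIc : I n ≤ ⨆ k, I k := le_ciSup hbddI n
        have hcM : (⨆ k, I k) ≤ M n := by
          refine ciSup_le fun j => ?_
          rcases le_total j n with hj | hj
          · exact (hIt m f hj).trans (hIM m f n)
          · exact (hIM m f j).trans (hMt m f hj)
        refine (ContinuousMap.norm_le _ (by linarith [hIM m f n] : (0:ℝ) ≤ M n - I n)).mpr ?_
        intro y
        have h1y : iterB B m f n y ≤ M n := le_csSup_range _ y
        have h2y : I n ≤ iterB B m f n y := csInf_range_le _ y
        rw [ContinuousMap.sub_apply, ContinuousMap.const_apply, Real.norm_eq_abs, abs_le]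
        constructor <;> linarith
      · exact h1 m f
    · intro h2 m f
      obtain ⟨c, hc⟩ := h2 m f
      refine squeeze_zero (fun n => by simpa [hcvar] using sub_nonneg.mpr (hIM m f n))
        (fun n => ?_) (by simpa using hc.const_mul 2)
      have hub : sSup (Set.range (iterB B m f n)) ≤
          c + ‖iterB B m f n - ContinuousMap.const (X (m + n)) c‖ := by
        refine csSup_le (Set.range_nonempty _) ?_
        rintro _ ⟨y, rfl⟩
        have := le_of_abs_le
          ((iterB B m f n - ContinuousMap.const (X (m + n)) c).norm_coe_le_norm y)
        rw [ContinuousMap.sub_apply, ContinuousMap.const_apply] at this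
        linarith
      have hlb : c - ‖iterB B m f n - ContinuousMap.const (X (m + n)) c‖ ≤
          sInf (Set.range (iterB B m f n)) := by
        refine le_csInf (Set.range_nonempty _) ?_
        rintro _ ⟨y, rfl⟩
        have := neg_le_of_abs_le
          ((iterB B m f n - ContinuousMap.const (X (m + n)) c).norm_coe_le_norm y)
        rw [ContinuousMap.sub_apply, ContinuousMap.const_apply] at this
        linarith
      rw [hcvar]
      linarith
  refine ⟨part12, ?_, ?_⟩
  · -- (2) → (3)
    intro h2
    obtain ⟨τ0, hτ0, -⟩ := exists_coherent B hBpos hBone (fun N => Classical.arbitrary (X N))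
    have key : ∀ σ : ∀ n, C(X n, ℝ) →ₗ[ℝ] ℝ,
        ((∀ n (g : C(X n, ℝ)), (∀ x, 0 ≤ g x) → 0 ≤ σ n g) ∧ (∀ n, σ n 1 = 1) ∧
         (∀ n (g : C(X n, ℝ)), σ n g = σ (n + 1) (B n g))) →
        ∀ n (g : C(X n, ℝ)) c,
          Tendsto (fun k => ‖iterB B n g k - ContinuousMap.const (X (n + k)) c‖) atTop (nhds 0) →
          σ n g = c := by
      rintro σ ⟨hp, ho, hco⟩ n g c hc
      have hbd : ∀ k, |σ n g - c| ≤ ‖iterB B n g k - ContinuousMap.const (X (n + k)) c‖ := by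
        intro k
        have hrw : σ n g - c =
            σ (n + k) (iterB B n g k - ContinuousMap.const (X (n + k)) c) := by
          rw [map_sub, state_const _ (ho (n + k)), ← state_iter B σ hco n g k]
        rw [hrw]
        exact state_bound _ (hp (n + k)) (ho (n + k)) _
      have h0 : |σ n g - c| ≤ 0 := ge_of_tendsto hc (Eventually.of_forall hbd)
      have := abs_nonneg (σ n g - c)
      have : |σ n g - c| = 0 := le_antisymm h0 this
      rw [abs_eq_zero, sub_eq_zero] at this
      exact this
    refine ⟨τ0, hτ0, fun σ hσ => ?_⟩
    funext n
    refine LinearMap.ext fun g => ?_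
    obtain ⟨c, hc⟩ := h2 n g
    rw [key σ hσ n g c hc, key τ0 hτ0 n g c hc]
  · -- (3) → (2)
    intro h3
    refine part12.mp fun m f => ?_
    set M : ℕ → ℝ := fun n => sSup (Set.range (iterB B m f n)) with hM
    set I : ℕ → ℝ := fun n => sInf (Set.range (iterB B m f n)) with hI
    have hbddM : BddBelow (Set.range M) := by
      refine ⟨I 0, ?_⟩
      rintro _ ⟨n, rfl⟩
      exact (hIt m f (Nat.zero_le n)).trans (hIM m f n)
    have hbddI : BddAbove (Set.range I) := by
      refine ⟨M 0, ?_⟩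
      rintro _ ⟨n, rfl⟩
      exact (hIM m f n).trans (hMt m f (Nat.zero_le n))
    have ha : Tendsto M atTop (nhds (⨅ n, M n)) := tendsto_atTop_ciInf (hMt m f) hbddM
    have hb : Tendsto I atTop (nhds (⨆ n, I n)) := tendsto_atTop_ciSup (hIt m f) hbddI
    suffices hab : (⨅ n, M n) = ⨆ n, I n by
      have hT : Tendsto (fun n => M n - I n) atTop (nhds ((⨅ n, M n) - ⨆ n, I n)) := ha.sub hb
      rw [hab, sub_self] at hT
      exact hT
    -- extremal points
    have hymax : ∀ k, ∃ y : X (m + k), iterB B m f k y = M k := fun k => csSup_range_mem _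
    have hymin : ∀ k, ∃ y : X (m + k), iterB B m f k y = I k := fun k => csInf_range_mem _
    choose ymax hymax using hymax
    choose ymin hymin using hymin
    obtain ⟨τa, hτa, hlima⟩ := exists_coherent B hBpos hBone (xof m ymax)
    obtain ⟨τb, hτb, hlimb⟩ := exists_coherent B hBpos hBone (xof m ymin)
    have hgen : ∀ (y : ∀ k, X (m + k)) (v : ℕ → ℝ) (L : ℝ),
        (∀ k, iterB B m f k (y k) = v k) → Tendsto v atTop (nhds L) →
        ∀ (τ : ∀ n, C(X n, ℝ) →ₗ[ℝ] ℝ),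
        Tendsto (fun N => tN B (xof m y) N m f) (Ultrafilter.of (atTop : Filter ℕ))
          (nhds (τ m f)) → τ m f = L := by
      intro y v L hyv hvL τ hlim
      refine tendsto_nhds_unique hlim ?_
      have hev : ∀ᶠ N in (atTop : Filter ℕ), v (N - m) = tN B (xof m y) N m f := by
        refine eventually_atTop.mpr ⟨m, fun N hN => ?_⟩
        rw [tN, evpt_xof m y N hN, hyv]
      have hvm : Tendsto (fun N => v (N - m)) atTop (nhds L) :=
        hvL.comp (tendsto_sub_atTop_nat m)
      exact (hvm.mono_left (Ultrafilter.of_le _)).congr'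
        (hev.filter_mono (Ultrafilter.of_le _))
    have hMa : Tendsto (fun k => M k) atTop (nhds (⨅ n, M n)) := ha
    have hva : τa m f = ⨅ n, M n := hgen ymax M _ hymax hMa τa (hlima m f)
    have hvb : τb m f = ⨆ n, I n := hgen ymin I _ hymin hb τb (hlimb m f)
    obtain ⟨τ, -, huniq⟩ := h3
    have hab : τa = τb := (huniq τa hτa).trans (huniq τb hτb).symm
    rw [← hva, ← hvb, hab]
end

section
/- Let (Iₙ) be finite nonempty sets and Aₙ : (Iₙ₋₁→ℝ) → (Iₙ→ℝ) linear operators given by matrices aₙ with strictly positive entries. Let εₙ = (min entry of aₙ)/(max entry of aₙ). If ∑ₙ εₙ = ∞, then there is exactly one sequence (μₙ) of nonnegative measures on Iₙ with μₙ₋₁ = Aₙ*μₙ for all n ≥ 1 and μ₀(I₀) = 1 (i.e. ∑_{i∈I₀} μ₀(i) = 1). -/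
open Finset Filter Topology

section aux

variable {I : ℕ → Type*} [∀ n, Fintype (I n)] [∀ n, Nonempty (I n)]

def fwd (a : ∀ n, I (n + 1) → I n → ℝ) (m : ℕ) (g : I m → ℝ) : (k : ℕ) → I (m + k) → ℝ
  | 0 => g
  | (k+1) => fun j => ∑ i, a (m + k) j i * fwd a m g k i

def approx (a : ∀ n, I (n + 1) → I n → ℝ) (N n : ℕ) : I n → ℝ :=
  if N ≤ n then fun _ => 1 else fun i => ∑ j, a n j i * approx a N (n + 1) j
termination_by N - n
decreasing_by omega

lemma approx_succ (a : ∀ n, I (n + 1) → I n → ℝ) {N n : ℕ} (h : n < N) (i : I n) :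
    approx a N n i = ∑ j, a n j i * approx a N (n + 1) j := by
  rw [approx, if_neg (by omega)]

lemma approx_pos (a : ∀ n, I (n + 1) → I n → ℝ)
    (hpos : ∀ n (j : I (n + 1)) (i : I n), 0 < a n j i) (N n : ℕ) (i : I n) :
    0 < approx a N n i := by
  rw [approx]
  split
  · exact one_pos
  · exact Finset.sum_pos
      (fun j _ => mul_pos (hpos n j i) (approx_pos a hpos N (n + 1) j)) univ_nonempty
termination_by N - n
decreasing_by omega

lemma exists_sol (a : ∀ n, I (n + 1) → I n → ℝ)
    (hpos : ∀ n (j : I (n + 1)) (i : I n), 0 < a n j i) :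
    ∃ μ : ∀ n, I n → ℝ,
      (∀ n (i : I n), 0 ≤ μ n i) ∧
      (∀ n (i : I n), μ n i = ∑ j, a n j i * μ (n + 1) j) ∧
      (∑ i, μ 0 i = 1) := by
  classical
  have hap : ∀ N n (i : I n), 0 < approx a N n i := approx_pos a hpos
  set c : ℕ → ℝ := fun N => ∑ i, approx a N 0 i with hc
  have hcpos : ∀ N, 0 < c N := fun N => Finset.sum_pos (fun i _ => hap N 0 i) univ_nonempty
  set μa : ℕ → ∀ n, I n → ℝ := fun N n i => approx a N n i / c N with hμa
  have hμa_pos : ∀ N n (i : I n), 0 < μa N n i := fun N n i => div_pos (hap N n i) (hcpos N)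
  have hμa_rel : ∀ N n, n < N → ∀ i : I n, μa N n i = ∑ j, a n j i * μa N (n + 1) j := by
    intro N n h i
    simp only [hμa]
    rw [approx_succ a h i, Finset.sum_div]
    exact Finset.sum_congr rfl fun j _ => by rw [mul_div_assoc]
  have hμa_norm : ∀ N, ∑ i, μa N 0 i = 1 := by
    intro N
    simp only [hμa]
    rw [← Finset.sum_div, div_self (hcpos N).ne']
  -- inf of entries
  set ia : ∀ n, ℝ := fun n => univ.inf' univ_nonempty (fun p : I (n + 1) × I n => a n p.1 p.2)
    with hia_def
  have hia_pos : ∀ n, 0 < ia n := by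
    intro n
    rw [hia_def]
    exact (Finset.lt_inf'_iff _).mpr fun p _ => hpos n p.1 p.2
  have hia_le : ∀ n (j : I (n + 1)) (i : I n), ia n ≤ a n j i := fun n j i =>
    Finset.inf'_le _ (mem_univ (j, i))
  -- mass bound
  set C : ℕ → ℝ := fun n => Nat.rec 1 (fun k Ck => Ck / ia k) n with hC
  have hCsucc : ∀ n, C (n + 1) = C n / ia n := fun n => rfl
  have hmass : ∀ N n, n < N → ∑ i, μa N n i ≤ C n := by
    intro N n
    induction n with
    | zero => intro _; rw [hμa_norm]; exact le_of_eq rfl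
    | succ n ih =>
      intro h
      have h' : n < N := by omega
      have hb := ih h'
      obtain ⟨i0⟩ := ‹∀ n, Nonempty (I n)› n
      have h1 : ia n * ∑ j, μa N (n + 1) j ≤ μa N n i0 := by
        rw [hμa_rel N n h' i0, Finset.mul_sum]
        exact Finset.sum_le_sum fun j _ =>
          mul_le_mul_of_nonneg_right (hia_le n j i0) (hμa_pos N (n + 1) j).le
      have h2 : μa N n i0 ≤ ∑ i, μa N n i :=
        Finset.single_le_sum (fun i _ => (hμa_pos N n i).le) (mem_univ i0)
      rw [hCsucc, le_div_iff₀ (hia_pos n)]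
      calc (∑ j, μa N (n + 1) j) * ia n = ia n * ∑ j, μa N (n + 1) j := mul_comm _ _
        _ ≤ μa N n i0 := h1
        _ ≤ ∑ i, μa N n i := h2
        _ ≤ C n := hb
  -- ultrafilter limits
  set u : Ultrafilter ℕ := Ultrafilter.of atTop with hu_def
  have hu : (u : Filter ℕ) ≤ atTop := Ultrafilter.of_le _
  have key : ∀ n (i : I n), ∃ x, 0 ≤ x ∧ Tendsto (fun N => μa N n i) u (𝓝 x) := by
    intro n i
    have hmem : ∀ᶠ N in atTop, μa N n i ∈ Set.Icc (0:ℝ) (C n) := by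
      filter_upwards [eventually_gt_atTop n] with N hN
      exact ⟨(hμa_pos N n i).le,
        le_trans (Finset.single_le_sum (fun i' _ => (hμa_pos N n i').le) (mem_univ i))
          (hmass N n hN)⟩
    have hmem' : ∀ᶠ N in (u : Filter ℕ), μa N n i ∈ Set.Icc (0:ℝ) (C n) :=
      hmem.filter_mono hu
    have hle : (u.map (fun N => μa N n i) : Filter ℝ) ≤ 𝓟 (Set.Icc (0:ℝ) (C n)) := by
      rw [Filter.le_principal_iff]
      exact mem_map.mpr hmem'
    obtain ⟨x, hx, hconv⟩ := isCompact_Icc.ultrafilter_le_nhds _ hle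
    exact ⟨x, hx.1, hconv⟩
  choose μ hnn hconv using key
  refine ⟨μ, hnn, ?_, ?_⟩
  · intro n i
    have t1 : Tendsto (fun N => μa N n i) u (𝓝 (μ n i)) := hconv n i
    have t2 : Tendsto (fun N => ∑ j, a n j i * μa N (n + 1) j) u
        (𝓝 (∑ j, a n j i * μ (n + 1) j)) :=
      tendsto_finset_sum _ fun j _ => (hconv (n + 1) j).const_mul _
    have heq : (fun N => μa N n i) =ᶠ[(u : Filter ℕ)]
        fun N => ∑ j, a n j i * μa N (n + 1) j := by
      have : ∀ᶠ N in atTop, n < N := eventually_gt_atTop n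
      filter_upwards [this.filter_mono hu] with N hN
      exact hμa_rel N n hN i
    exact tendsto_nhds_unique t1 (t2.congr' heq.symm)
  · have t1 : Tendsto (fun N => ∑ i, μa N 0 i) u (𝓝 (∑ i, μ 0 i)) :=
      tendsto_finset_sum _ fun i _ => hconv 0 i
    have t2 : Tendsto (fun N => ∑ i, μa N 0 i) u (𝓝 1) := by
      simp only [hμa_norm]
      exact tendsto_const_nhds
    exact tendsto_nhds_unique t1 t2


lemma uniq_sol (a : ∀ n, I (n + 1) → I n → ℝ)
    (hpos : ∀ n (j : I (n + 1)) (i : I n), 0 < a n j i)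
    (ε : ℕ → ℝ)
    (hε : ∀ n, ε n =
      (univ.inf' univ_nonempty (fun p : I (n + 1) × I n => a n p.1 p.2)) /
      (univ.sup' univ_nonempty (fun p : I (n + 1) × I n => a n p.1 p.2)))
    (hdiv : Tendsto (fun N => ∑ n ∈ range N, ε n) atTop atTop)
    {μ ν : ∀ n, I n → ℝ}
    (hμ0 : ∀ n (i : I n), 0 ≤ μ n i)
    (hμ1 : ∀ n (i : I n), μ n i = ∑ j, a n j i * μ (n + 1) j)
    (hμ2 : ∑ i, μ 0 i = 1)
    (hν0 : ∀ n (i : I n), 0 ≤ ν n i)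
    (hν1 : ∀ n (i : I n), ν n i = ∑ j, a n j i * ν (n + 1) j)
    (hν2 : ∑ i, ν 0 i = 1) : μ = ν := by
  classical
  set ia : ℕ → ℝ := fun n => univ.inf' univ_nonempty (fun p : I (n + 1) × I n => a n p.1 p.2)
    with hia_def
  set sa : ℕ → ℝ := fun n => univ.sup' univ_nonempty (fun p : I (n + 1) × I n => a n p.1 p.2)
    with hsa_def
  have hia_pos : ∀ n, 0 < ia n := fun n =>
    (Finset.lt_inf'_iff _).mpr fun p _ => hpos n p.1 p.2
  have hia_le : ∀ n (j : I (n + 1)) (i : I n), ia n ≤ a n j i := fun n j i =>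
    Finset.inf'_le _ (mem_univ (j, i))
  have hle_sa : ∀ n (j : I (n + 1)) (i : I n), a n j i ≤ sa n := fun n j i =>
    Finset.le_sup' (fun p : I (n + 1) × I n => a n p.1 p.2) (mem_univ (j, i))
  have hsa_pos : ∀ n, 0 < sa n := by
    intro n
    obtain ⟨j⟩ := ‹∀ n, Nonempty (I n)› (n + 1)
    obtain ⟨i⟩ := ‹∀ n, Nonempty (I n)› n
    exact lt_of_lt_of_le (hpos n j i) (hle_sa n j i)
  have hε_eq : ∀ n, ε n = ia n / sa n := hε
  have hε_pos : ∀ n, 0 < ε n := fun n => (hε_eq n) ▸ div_pos (hia_pos n) (hsa_pos n)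
  have hε_le1 : ∀ n, ε n ≤ 1 := by
    intro n
    rw [hε_eq n, div_le_one (hsa_pos n)]
    obtain ⟨j⟩ := ‹∀ n, Nonempty (I n)› (n + 1)
    obtain ⟨i⟩ := ‹∀ n, Nonempty (I n)› n
    exact le_trans (hia_le n j i) (hle_sa n j i)
  -- mass positivity for any solution
  have mass_pos : ∀ (ρ : ∀ n, I n → ℝ), (∀ n (i : I n), 0 ≤ ρ n i) →
      (∀ n (i : I n), ρ n i = ∑ j, a n j i * ρ (n + 1) j) → (∑ i, ρ 0 i = 1) →
      ∀ n, 0 < ∑ i, ρ n i := by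
    intro ρ h0 h1 h2 n
    induction n with
    | zero => rw [h2]; norm_num
    | succ n ih =>
      by_contra hcon
      have hz : ∑ j, ρ (n + 1) j = 0 :=
        le_antisymm (not_lt.mp hcon) (Finset.sum_nonneg fun j _ => h0 _ j)
      have hall := (Finset.sum_eq_zero_iff_of_nonneg (fun j _ => h0 _ j)).mp hz
      have hzero : ∑ i, ρ n i = 0 := by
        refine Finset.sum_eq_zero fun i _ => ?_
        rw [h1 n i]
        exact Finset.sum_eq_zero fun j _ => by rw [hall j (mem_univ j), mul_zero]
      exact ih.ne' hzero
  -- positivity of forward products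
  have fwd_pos : ∀ m (g : I m → ℝ), (∀ i, 0 < g i) → ∀ k (j : I (m + k)), 0 < fwd a m g k j := by
    intro m g hg k
    induction k with
    | zero => exact hg
    | succ k ih =>
      intro j
      simp only [fwd]
      exact Finset.sum_pos (fun i _ => mul_pos (hpos _ j i) (ih i)) univ_nonempty
  -- pairing invariance
  have fwd_pair : ∀ (ρ : ∀ n, I n → ℝ), (∀ n (i : I n), ρ n i = ∑ j, a n j i * ρ (n + 1) j) →
      ∀ m (g : I m → ℝ) k, ∑ j, ρ (m + k) j * fwd a m g k j = ∑ i, ρ m i * g i := by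
    intro ρ h1 m g k
    induction k with
    | zero => rfl
    | succ k ih =>
      calc ∑ j, ρ (m + k + 1) j * fwd a m g (k + 1) j
          = ∑ j, ∑ i, ρ (m + k + 1) j * (a (m + k) j i * fwd a m g k i) := by
            simp only [fwd, Finset.mul_sum]
        _ = ∑ i, ∑ j, ρ (m + k + 1) j * (a (m + k) j i * fwd a m g k i) := Finset.sum_comm
        _ = ∑ i, ρ (m + k) i * fwd a m g k i := by
            refine Finset.sum_congr rfl fun i _ => ?_
            rw [h1 (m + k) i, Finset.sum_mul]
            exact Finset.sum_congr rfl fun j _ => by ring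
        _ = ∑ i, ρ m i * g i := ih
  -- core proportionality
  have core : ∀ m (g : I m → ℝ),
      (∑ i, ν m i) * (∑ i, μ m i * g i) = (∑ i, μ m i) * (∑ i, ν m i * g i) := by
    intro m g
    set U : (k : ℕ) → I (m + k) → ℝ := fwd a m (fun _ => 1) with hU
    set G : (k : ℕ) → I (m + k) → ℝ := fwd a m g with hG
    have hUpos : ∀ k (j : I (m + k)), 0 < U k j := fwd_pos m _ (fun _ => one_pos)
    set f : (k : ℕ) → I (m + k) → ℝ := fun k j => G k j / U k j with hf
    set vmax : ℕ → ℝ := fun k => univ.sup' univ_nonempty (f k) with hvmax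
    set vmin : ℕ → ℝ := fun k => univ.inf' univ_nonempty (f k) with hvmin
    have hfle : ∀ k (j : I (m + k)), f k j ≤ vmax k := fun k j =>
      Finset.le_sup' (f k) (mem_univ j)
    have hlef : ∀ k (j : I (m + k)), vmin k ≤ f k j := fun k j =>
      Finset.inf'_le (f k) (mem_univ j)
    have hGfU : ∀ k (j : I (m + k)), G k j = f k j * U k j := fun k j =>
      (div_mul_cancel₀ _ (hUpos k j).ne').symm
    -- contraction step
    have contr : ∀ k, vmax (k + 1) - vmin (k + 1) ≤ (1 - ε (m + k)) * (vmax k - vmin k) := by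
      intro k
      set S : ℝ := ∑ i, U k i with hS
      have hSpos : 0 < S := Finset.sum_pos (fun i _ => hUpos k i) univ_nonempty
      have hwsum : ∑ i, U k i / S = 1 := by rw [← Finset.sum_div, div_self hSpos.ne']
      set W : ℝ := ∑ i, U k i / S * f k i with hW
      have keyAB : ∀ j : I (m + (k + 1)),
          f (k + 1) j ≤ ε (m + k) * W + (1 - ε (m + k)) * vmax k ∧
          ε (m + k) * W + (1 - ε (m + k)) * vmin k ≤ f (k + 1) j := by
        intro j
        set D : ℝ := U (k + 1) j with hD
        have hDpos : 0 < D := hUpos (k + 1) j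
        have hDdef : D = ∑ i, a (m + k) j i * U k i := by rw [hD, hU]; rfl
        set B : I (m + k) → ℝ := fun i => a (m + k) j i * U k i / D with hB
        have hB1 : ∑ i, B i = 1 := by
          rw [hB, ← Finset.sum_div, ← hDdef, div_self hDpos.ne']
        have hBw : ∀ i, ε (m + k) * (U k i / S) ≤ B i := by
          intro i
          rw [hε_eq (m + k), hB, div_mul_div_comm]
          have hDle : D ≤ sa (m + k) * S := by
            rw [hDdef, hS, Finset.mul_sum]
            exact Finset.sum_le_sum fun i' _ =>
              mul_le_mul_of_nonneg_right (hle_sa (m + k) j i') (hUpos k i').le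
          exact div_le_div₀ (mul_nonneg (hpos (m + k) j i).le (hUpos k i).le)
            (mul_le_mul_of_nonneg_right (hia_le (m + k) j i) (hUpos k i).le) hDpos hDle
        have hfrec : f (k + 1) j = ∑ i, B i * f k i := by
          have hGdef : G (k + 1) j = ∑ i, a (m + k) j i * G k i := by rw [hG]; rfl
          rw [hf]
          show G (k + 1) j / D = _
          rw [hGdef, Finset.sum_div]
          refine Finset.sum_congr rfl fun i _ => ?_
          rw [hGfU k i, hB]
          ring
        have expand : ∑ i, B i * f k i
            = ε (m + k) * W + ∑ i, (B i - ε (m + k) * (U k i / S)) * f k i := by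
          rw [hW, Finset.mul_sum, ← Finset.sum_add_distrib]
          exact Finset.sum_congr rfl fun i _ => by ring
        have hcoef : ∀ i : I (m + k), 0 ≤ B i - ε (m + k) * (U k i / S) := fun i =>
          sub_nonneg.mpr (hBw i)
        have hcsum : ∑ i, (B i - ε (m + k) * (U k i / S)) = 1 - ε (m + k) := by
          rw [Finset.sum_sub_distrib, hB1, ← Finset.mul_sum, hwsum, mul_one]
        constructor
        · rw [hfrec, expand]
          have : ∑ i, (B i - ε (m + k) * (U k i / S)) * f k i
              ≤ ∑ i, (B i - ε (m + k) * (U k i / S)) * vmax k :=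
            Finset.sum_le_sum fun i _ => mul_le_mul_of_nonneg_left (hfle k i) (hcoef i)
          rw [← Finset.sum_mul] at this
          rw [hcsum] at this
          linarith
        · rw [hfrec, expand]
          have : ∑ i, (B i - ε (m + k) * (U k i / S)) * vmin k
              ≤ ∑ i, (B i - ε (m + k) * (U k i / S)) * f k i :=
            Finset.sum_le_sum fun i _ => mul_le_mul_of_nonneg_left (hlef k i) (hcoef i)
          rw [← Finset.sum_mul] at this
          rw [hcsum] at this
          linarith
      have h1 : vmax (k + 1) ≤ ε (m + k) * W + (1 - ε (m + k)) * vmax k :=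
        Finset.sup'_le _ _ fun j _ => (keyAB j).1
      have h2 : ε (m + k) * W + (1 - ε (m + k)) * vmin k ≤ vmin (k + 1) :=
        Finset.le_inf' _ _ fun j _ => (keyAB j).2
      have hr : (1 - ε (m + k)) * (vmax k - vmin k)
          = (1 - ε (m + k)) * vmax k - (1 - ε (m + k)) * vmin k := by ring
      linarith
    -- iterate the contraction
    have hone : ∀ t, (0:ℝ) ≤ 1 - ε (m + t) := fun t => by linarith [hε_le1 (m + t)]
    have var_le : ∀ k, vmax k - vmin k
        ≤ (vmax 0 - vmin 0) * ∏ t ∈ range k, (1 - ε (m + t)) := by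
      intro k
      induction k with
      | zero => simp
      | succ k ih =>
        rw [Finset.prod_range_succ]
        calc vmax (k + 1) - vmin (k + 1) ≤ (1 - ε (m + k)) * (vmax k - vmin k) := contr k
          _ ≤ (1 - ε (m + k)) * ((vmax 0 - vmin 0) * ∏ t ∈ range k, (1 - ε (m + t))) :=
              mul_le_mul_of_nonneg_left ih (hone k)
          _ = _ := by ring
    -- the product tends to zero
    have prod_nonneg' : ∀ k, 0 ≤ ∏ t ∈ range k, (1 - ε (m + t)) := fun k =>
      Finset.prod_nonneg fun t _ => hone t
    have prod_le_exp : ∀ k, ∏ t ∈ range k, (1 - ε (m + t))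
        ≤ Real.exp (-(∑ t ∈ range k, ε (m + t))) := by
      intro k
      have hneg : -(∑ t ∈ range k, ε (m + t)) = ∑ t ∈ range k, -ε (m + t) := by
        rw [← Finset.sum_neg_distrib]
      rw [hneg, Real.exp_sum]
      exact Finset.prod_le_prod (fun t _ => hone t)
        (fun t _ => by linarith [Real.add_one_le_exp (-ε (m + t))])
    have hsum_top : Tendsto (fun k => ∑ t ∈ range k, ε (m + t)) atTop atTop := by
      have heq : ∀ k, ∑ t ∈ range k, ε (m + t)
          = (∑ n ∈ range (m + k), ε n) + -(∑ n ∈ range m, ε n) := by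
        intro k
        rw [Finset.sum_range_add]
        ring
      simp only [heq]
      have hmono : Tendsto (fun k => m + k) atTop atTop :=
        tendsto_atTop_mono (fun k => Nat.le_add_left k m) tendsto_id
      exact tendsto_atTop_add_const_right _ _ (hdiv.comp hmono)
    have hexp0 : Tendsto (fun k => Real.exp (-(∑ t ∈ range k, ε (m + t)))) atTop (𝓝 0) :=
      Real.tendsto_exp_atBot.comp (tendsto_neg_atTop_atBot.comp hsum_top)
    have hP0 : Tendsto (fun k => ∏ t ∈ range k, (1 - ε (m + t))) atTop (𝓝 0) :=
      squeeze_zero prod_nonneg' prod_le_exp hexp0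
    -- pairing bounds
    set cμ : ℝ := ∑ i, μ m i with hcμdef
    set cν : ℝ := ∑ i, ν m i with hcνdef
    have hcμ : 0 < cμ := mass_pos μ hμ0 hμ1 hμ2 m
    have hcν : 0 < cν := mass_pos ν hν0 hν1 hν2 m
    have bounds : ∀ (ρ : ∀ n, I n → ℝ), (∀ n (i : I n), 0 ≤ ρ n i) →
        (∀ n (i : I n), ρ n i = ∑ j, a n j i * ρ (n + 1) j) → ∀ k,
        vmin k * (∑ i, ρ m i) ≤ ∑ i, ρ m i * g i ∧
        ∑ i, ρ m i * g i ≤ vmax k * (∑ i, ρ m i) := by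
      intro ρ h0 h1 k
      have hUmass : ∑ j, ρ (m + k) j * U k j = ∑ i, ρ m i := by
        rw [hU, fwd_pair ρ h1 m _ k]
        simp
      have hGpair : ∑ j, ρ (m + k) j * G k j = ∑ i, ρ m i * g i := fwd_pair ρ h1 m g k
      constructor
      · rw [← hGpair, ← hUmass, Finset.mul_sum]
        refine Finset.sum_le_sum fun j _ => ?_
        rw [hGfU k j]
        calc vmin k * (ρ (m + k) j * U k j)
            ≤ f k j * (ρ (m + k) j * U k j) :=
              mul_le_mul_of_nonneg_right (hlef k j)
                (mul_nonneg (h0 (m + k) j) (hUpos k j).le)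
          _ = ρ (m + k) j * (f k j * U k j) := by ring
      · rw [← hGpair, ← hUmass, Finset.mul_sum]
        refine Finset.sum_le_sum fun j _ => ?_
        rw [hGfU k j]
        calc ρ (m + k) j * (f k j * U k j)
            = f k j * (ρ (m + k) j * U k j) := by ring
          _ ≤ vmax k * (ρ (m + k) j * U k j) :=
              mul_le_mul_of_nonneg_right (hfle k j)
                (mul_nonneg (h0 (m + k) j) (hUpos k j).le)
    -- conclusion
    have habs : ∀ k, |cν * (∑ i, μ m i * g i) - cμ * (∑ i, ν m i * g i)|
        ≤ (cμ * cν * (vmax 0 - vmin 0)) * ∏ t ∈ range k, (1 - ε (m + t)) := by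
      intro k
      obtain ⟨hμlb, hμub⟩ := bounds μ hμ0 hμ1 k
      obtain ⟨hνlb, hνub⟩ := bounds ν hν0 hν1 k
      have hv := var_le k
      rw [abs_le]
      constructor
      · nlinarith [mul_le_mul_of_nonneg_left hμlb hcν.le,
          mul_le_mul_of_nonneg_left hνub hcμ.le,
          mul_le_mul_of_nonneg_left hv (mul_pos hcμ hcν).le]
      · nlinarith [mul_le_mul_of_nonneg_left hμub hcν.le,
          mul_le_mul_of_nonneg_left hνlb hcμ.le,
          mul_le_mul_of_nonneg_left hv (mul_pos hcμ hcν).le]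
    have hT : Tendsto (fun k => (cμ * cν * (vmax 0 - vmin 0)) * ∏ t ∈ range k, (1 - ε (m + t)))
        atTop (𝓝 0) := by
      have := hP0.const_mul (cμ * cν * (vmax 0 - vmin 0))
      simpa using this
    have hx : |cν * (∑ i, μ m i * g i) - cμ * (∑ i, ν m i * g i)| ≤ 0 :=
      ge_of_tendsto' hT habs
    have := abs_nonpos_iff.mp hx
    linarith [sub_eq_zero.mp this]
  -- final induction
  have main : ∀ n, μ n = ν n := by
    intro n
    induction n with
    | zero =>
      funext i
      have h := core 0 (fun i' => if i' = i then 1 else 0)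
      simp only [mul_ite, mul_one, mul_zero, Finset.sum_ite_eq', mem_univ, if_true,
        hμ2, hν2, one_mul] at h
      exact h
    | succ n ih =>
      have col : ∀ (ρ : ∀ n, I n → ℝ), (∀ n (i : I n), ρ n i = ∑ j, a n j i * ρ (n + 1) j) →
          ∑ j, ρ (n + 1) j * (∑ i, a n j i) = ∑ i, ρ n i := by
        intro ρ h1
        simp only [Finset.mul_sum]
        rw [Finset.sum_comm]
        refine Finset.sum_congr rfl fun i _ => ?_
        rw [h1 n i]
        exact Finset.sum_congr rfl fun j _ => (mul_comm _ _)
      have hTμ := col μ hμ1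
      have hTν := col ν hν1
      have hmass_eq : (∑ j, ν (n + 1) j) = ∑ j, μ (n + 1) j := by
        have h := core (n + 1) (fun j => ∑ i, a n j i)
        rw [hTμ, hTν, ih] at h
        exact mul_right_cancel₀ (mass_pos ν hν0 hν1 hν2 n).ne' h
      funext j
      have h := core (n + 1) (fun j' => if j' = j then 1 else 0)
      simp only [mul_ite, mul_one, mul_zero, Finset.sum_ite_eq', mem_univ, if_true] at h
      rw [hmass_eq] at h
      exact mul_left_cancel₀ (mass_pos μ hμ0 hμ1 hμ2 (n + 1)).ne' h
  funext n
  exact main n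


end aux

/-- unique state criterion for a sequence of strictly positive
matrices whose min/max entry ratios have divergent sum. -/
theorem stmt16 {I : ℕ → Type*} [∀ n, Fintype (I n)] [∀ n, Nonempty (I n)]
    (a : ∀ n, I (n + 1) → I n → ℝ)
    (hpos : ∀ n (j : I (n + 1)) (i : I n), 0 < a n j i)
    (ε : ℕ → ℝ)
    (hε : ∀ n, ε n =
      (univ.inf' univ_nonempty (fun p : I (n + 1) × I n => a n p.1 p.2)) /
      (univ.sup' univ_nonempty (fun p : I (n + 1) × I n => a n p.1 p.2)))
    (hdiv : Tendsto (fun N => ∑ n ∈ range N, ε n) atTop atTop) :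
    ∃! μ : ∀ n, I n → ℝ,
      (∀ n (i : I n), 0 ≤ μ n i) ∧
      (∀ n (i : I n), μ n i = ∑ j, a n j i * μ (n + 1) j) ∧
      (∑ i, μ 0 i = 1) := by
  obtain ⟨μ, h0, h1, h2⟩ := exists_sol a hpos
  exact ⟨μ, ⟨h0, h1, h2⟩, fun ν hg =>
    uniq_sol a hpos ε hε hdiv hg.1 hg.2.1 hg.2.2 h0 h1 h2⟩
end

section
/- Let I be a finite nonempty set and A : (I→ℝ) → (I→ℝ) given by a primitive nonnegative matrix a. Then every sequence (μₙ) of nonnegative measures on I with μₙ = A*μₙ₊₁ for all n and μ₀(I)=1 is of the form μₙ = λ^{-n} μ₀ where A*μ₀ = λ μ₀ and λ = μ₀(A1) > 0. -/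
open Finset

section AuxStmt17

open Filter Topology

variable {I : Type*} [Fintype I] [DecidableEq I] [Nonempty I]

/-- Birkhoff-type contraction: for a strictly positive matrix `P`, if `u` and `v`
are backward-coherent sequences of strictly positive vectors, then the
vectors `u 0` and `v 0` are proportional (stated as a cross-ratio inequality). -/
private lemma key17 (P : Matrix I I ℝ) (δ Δ : ℝ) (hδ : 0 < δ)
    (hPl : ∀ i j, δ ≤ P i j) (hPu : ∀ i j, P i j ≤ Δ)
    (u v : ℕ → I → ℝ) (hu : ∀ m i, 0 < u m i) (hv : ∀ m i, 0 < v m i)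
    (hcu : ∀ m i, u m i = ∑ j, P j i * u (m + 1) j)
    (hcv : ∀ m i, v m i = ∑ j, P j i * v (m + 1) j)
    (i j : I) : u 0 i * v 0 j ≤ u 0 j * v 0 i := by
  obtain ⟨i₀⟩ := ‹Nonempty I›
  have hΔ : 0 < Δ := hδ.trans_le ((hPl i₀ i₀).trans (hPu i₀ i₀))
  have hδΔ : δ ≤ Δ := (hPl i₀ i₀).trans (hPu i₀ i₀)
  set N : ℝ := (Fintype.card I : ℝ) with hNdef
  have hN : 1 ≤ N := by
    have := Fintype.card_pos (α := I)
    rw [hNdef]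
    exact_mod_cast this
  set β : ℝ := δ / (Δ * N) with hβdef
  have hβ : 0 < β := div_pos hδ (by positivity)
  have hβ1 : β ≤ 1 := by
    rw [hβdef, div_le_one (by positivity)]
    nlinarith
  set e : ℕ → I → ℝ := fun m k => u m k / v m k with hedef
  have he : ∀ m k, 0 < e m k := fun m k => div_pos (hu m k) (hv m k)
  set r : ℕ → ℝ := fun m => univ.sup' univ_nonempty (e m) with hrdef
  set s : ℕ → ℝ := fun m => univ.inf' univ_nonempty (e m) with hsdef
  have her : ∀ m k, e m k ≤ r m := fun m k => le_sup' _ (mem_univ k)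
  have hes : ∀ m k, s m ≤ e m k := fun m k => inf'_le _ (mem_univ k)
  have hs_pos : ∀ m, 0 < s m := fun m => (lt_inf'_iff _).2 fun k _ => he m k
  have hsr : ∀ m, s m ≤ r m := fun m => (hes m i₀).trans (her m i₀)
  have hSv : ∀ m, 0 < ∑ k, v m k := fun m => Finset.sum_pos (fun k _ => hv m k) univ_nonempty
  have hSu : ∀ m, 0 < ∑ k, u m k := fun m => Finset.sum_pos (fun k _ => hu m k) univ_nonempty
  have huv : ∀ m k, u m k = v m k * e m k := by
    intro m k
    rw [hedef, mul_comm, div_mul_cancel₀ _ (hv m k).ne']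
  -- bounds on vectors in terms of the sums at the next level
  have hvle : ∀ m k, v m k ≤ Δ * ∑ j, v (m + 1) j := by
    intro m k
    rw [hcv m k, mul_sum]
    exact sum_le_sum fun j _ => mul_le_mul_of_nonneg_right (hPu j k) (hv (m + 1) j).le
  have hvge : ∀ m k, δ * ∑ j, v (m + 1) j ≤ v m k := by
    intro m k
    rw [hcv m k, mul_sum]
    exact sum_le_sum fun j _ => mul_le_mul_of_nonneg_right (hPl j k) (hv (m + 1) j).le
  have hule : ∀ m k, u m k ≤ Δ * ∑ j, u (m + 1) j := by
    intro m k
    rw [hcu m k, mul_sum]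
    exact sum_le_sum fun j _ => mul_le_mul_of_nonneg_right (hPu j k) (hu (m + 1) j).le
  have huge : ∀ m k, δ * ∑ j, u (m + 1) j ≤ u m k := by
    intro m k
    rw [hcu m k, mul_sum]
    exact sum_le_sum fun j _ => mul_le_mul_of_nonneg_right (hPl j k) (hu (m + 1) j).le
  -- the contraction step
  have hstep : ∀ m, r m - s m ≤ (1 - β) * (r (m + 1) - s (m + 1)) := by
    intro m
    obtain ⟨k₀, -, hk₀⟩ := Finset.exists_max_image univ (v (m + 1)) univ_nonempty
    have hk₀' : ∑ j, v (m + 1) j ≤ N * v (m + 1) k₀ := by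
      calc ∑ j, v (m + 1) j ≤ ∑ _j : I, v (m + 1) k₀ :=
            sum_le_sum fun j _ => hk₀ j (mem_univ j)
        _ = N * v (m + 1) k₀ := by
            rw [sum_const, card_univ, nsmul_eq_mul, hNdef]
    have hβv : β * (Δ * ∑ j, v (m + 1) j) ≤ δ * v (m + 1) k₀ := by
      rw [hβdef, div_mul_eq_mul_div, div_le_iff₀ (by positivity)]
      nlinarith [mul_le_mul_of_nonneg_left hk₀' (mul_nonneg hδ.le hΔ.le)]
    have hU : ∀ k, e m k ≤ r (m + 1) - β * (r (m + 1) - e (m + 1) k₀) := by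
      intro k
      have hrE : 0 ≤ r (m + 1) - e (m + 1) k₀ := sub_nonneg.2 (her (m + 1) k₀)
      rw [hedef]
      rw [div_le_iff₀ (hv m k)]
      have hsum : r (m + 1) * v m k - u m k
          = ∑ l, P l k * v (m + 1) l * (r (m + 1) - e (m + 1) l) := by
        rw [hcu m k, hcv m k, mul_sum, ← sum_sub_distrib]
        refine sum_congr rfl fun l _ => ?_
        rw [huv (m + 1) l]
        ring
      have h1 : δ * v (m + 1) k₀ * (r (m + 1) - e (m + 1) k₀) ≤ r (m + 1) * v m k - u m k := by
        rw [hsum]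
        calc δ * v (m + 1) k₀ * (r (m + 1) - e (m + 1) k₀)
            ≤ P k₀ k * v (m + 1) k₀ * (r (m + 1) - e (m + 1) k₀) := by
              apply mul_le_mul_of_nonneg_right _ hrE
              exact mul_le_mul_of_nonneg_right (hPl k₀ k) (hv _ _).le
          _ ≤ ∑ l, P l k * v (m + 1) l * (r (m + 1) - e (m + 1) l) := by
              apply Finset.single_le_sum (f := fun l => P l k * v (m + 1) l * (r (m + 1) - e (m + 1) l)) _ (mem_univ k₀)
              intro l _
              have := sub_nonneg.2 (her (m + 1) l)
              have := (hδ.trans_le (hPl l k)).le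
              have := (hv (m + 1) l).le
              positivity
      have h2 : β * (r (m + 1) - e (m + 1) k₀) * v m k
          ≤ δ * v (m + 1) k₀ * (r (m + 1) - e (m + 1) k₀) := by
        calc β * (r (m + 1) - e (m + 1) k₀) * v m k
            ≤ β * (r (m + 1) - e (m + 1) k₀) * (Δ * ∑ j, v (m + 1) j) := by
              apply mul_le_mul_of_nonneg_left (hvle m k)
              positivity
          _ = (β * (Δ * ∑ j, v (m + 1) j)) * (r (m + 1) - e (m + 1) k₀) := by ring
          _ ≤ δ * v (m + 1) k₀ * (r (m + 1) - e (m + 1) k₀) :=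
              mul_le_mul_of_nonneg_right hβv hrE
      have hexp : (r (m + 1) - β * (r (m + 1) - e (m + 1) k₀)) * v m k
          = r (m + 1) * v m k - β * (r (m + 1) - e (m + 1) k₀) * v m k := by ring
      linarith [hexp, h1, h2]
    have hLq : ∀ k, s (m + 1) + β * (e (m + 1) k₀ - s (m + 1)) ≤ e m k := by
      intro k
      have hsE : 0 ≤ e (m + 1) k₀ - s (m + 1) := sub_nonneg.2 (hes (m + 1) k₀)
      rw [hedef]
      rw [le_div_iff₀ (hv m k)]
      have hsum : u m k - s (m + 1) * v m k
          = ∑ l, P l k * v (m + 1) l * (e (m + 1) l - s (m + 1)) := by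
        rw [hcu m k, hcv m k, mul_sum, ← sum_sub_distrib]
        refine sum_congr rfl fun l _ => ?_
        rw [huv (m + 1) l]
        ring
      have h1 : δ * v (m + 1) k₀ * (e (m + 1) k₀ - s (m + 1)) ≤ u m k - s (m + 1) * v m k := by
        rw [hsum]
        calc δ * v (m + 1) k₀ * (e (m + 1) k₀ - s (m + 1))
            ≤ P k₀ k * v (m + 1) k₀ * (e (m + 1) k₀ - s (m + 1)) := by
              apply mul_le_mul_of_nonneg_right _ hsE
              exact mul_le_mul_of_nonneg_right (hPl k₀ k) (hv _ _).le
          _ ≤ ∑ l, P l k * v (m + 1) l * (e (m + 1) l - s (m + 1)) := by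
              apply Finset.single_le_sum (f := fun l => P l k * v (m + 1) l * (e (m + 1) l - s (m + 1))) _ (mem_univ k₀)
              intro l _
              have := sub_nonneg.2 (hes (m + 1) l)
              have := (hδ.trans_le (hPl l k)).le
              have := (hv (m + 1) l).le
              positivity
      have h2 : β * (e (m + 1) k₀ - s (m + 1)) * v m k
          ≤ δ * v (m + 1) k₀ * (e (m + 1) k₀ - s (m + 1)) := by
        calc β * (e (m + 1) k₀ - s (m + 1)) * v m k
            ≤ β * (e (m + 1) k₀ - s (m + 1)) * (Δ * ∑ j, v (m + 1) j) := by
              apply mul_le_mul_of_nonneg_left (hvle m k)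
              positivity
          _ = (β * (Δ * ∑ j, v (m + 1) j)) * (e (m + 1) k₀ - s (m + 1)) := by ring
          _ ≤ δ * v (m + 1) k₀ * (e (m + 1) k₀ - s (m + 1)) :=
              mul_le_mul_of_nonneg_right hβv hsE
      have hexp : (s (m + 1) + β * (e (m + 1) k₀ - s (m + 1))) * v m k
          = s (m + 1) * v m k + β * (e (m + 1) k₀ - s (m + 1)) * v m k := by ring
      linarith [hexp, h1, h2]
    have hrm : r m ≤ r (m + 1) - β * (r (m + 1) - e (m + 1) k₀) :=
      Finset.sup'_le _ _ fun k _ => hU k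
    have hsm : s (m + 1) + β * (e (m + 1) k₀ - s (m + 1)) ≤ s m :=
      Finset.le_inf' _ _ fun k _ => hLq k
    nlinarith [hrm, hsm]
  -- monotonicity of s
  have hsmono : ∀ m, s (m + 1) ≤ s m := by
    intro m
    apply Finset.le_inf'
    intro k _
    rw [hedef, le_div_iff₀ (hv m k), hcu m k, hcv m k, mul_sum]
    apply sum_le_sum
    intro l _
    have h1 : s (m + 1) * v (m + 1) l ≤ u (m + 1) l := by
      have := hes (m + 1) l
      rw [hedef, le_div_iff₀ (hv (m + 1) l)] at this
      exact this
    calc s (m + 1) * (P l k * v (m + 1) l) = P l k * (s (m + 1) * v (m + 1) l) := by ring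
      _ ≤ P l k * u (m + 1) l :=
          mul_le_mul_of_nonneg_left h1 ((hδ.trans_le (hPl l k)).le)
  have hs0 : ∀ m, s m ≤ s 0 := by
    intro m
    induction m with
    | zero => exact le_refl _
    | succ m ih => exact (hsmono m).trans ih
  -- uniform comparability: r m ≤ C * s m
  set C : ℝ := Δ * Δ / (δ * δ) with hCdef
  have hC1 : 1 ≤ C := by
    rw [hCdef, le_div_iff₀ (by positivity)]
    nlinarith
  have hCs : ∀ m, r m ≤ C * s m := by
    intro m
    have h1 : r m ≤ Δ * (∑ j, u (m + 1) j) / (δ * ∑ j, v (m + 1) j) := by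
      apply Finset.sup'_le
      intro k _
      rw [hedef]
      exact div_le_div₀ (mul_nonneg hΔ.le (hSu (m + 1)).le) (hule m k) (mul_pos hδ (hSv (m + 1))) (hvge m k)
    have h2 : δ * (∑ j, u (m + 1) j) / (Δ * ∑ j, v (m + 1) j) ≤ s m := by
      apply Finset.le_inf'
      intro k _
      rw [hedef]
      exact div_le_div₀ (hu m k).le (huge m k) (hv m k) (hvle m k)
    have h3 : Δ * (∑ j, u (m + 1) j) / (δ * ∑ j, v (m + 1) j)
        = C * (δ * (∑ j, u (m + 1) j) / (Δ * ∑ j, v (m + 1) j)) := by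
      have e1 : δ ≠ 0 := hδ.ne'
      have e2 : Δ ≠ 0 := hΔ.ne'
      have e3 : (∑ j, v (m + 1) j) ≠ 0 := (hSv (m + 1)).ne'
      rw [hCdef]
      field_simp
    calc r m ≤ Δ * (∑ j, u (m + 1) j) / (δ * ∑ j, v (m + 1) j) := h1
      _ = C * (δ * (∑ j, u (m + 1) j) / (Δ * ∑ j, v (m + 1) j)) := h3
      _ ≤ C * s m := mul_le_mul_of_nonneg_left h2 (by linarith)
  -- the geometric chain
  have hchain : ∀ m, r 0 - s 0 ≤ (1 - β) ^ m * (r m - s m) := by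
    intro m
    induction m with
    | zero => simp
    | succ m ih =>
      calc r 0 - s 0 ≤ (1 - β) ^ m * (r m - s m) := ih
        _ ≤ (1 - β) ^ m * ((1 - β) * (r (m + 1) - s (m + 1))) :=
            mul_le_mul_of_nonneg_left (hstep m) (pow_nonneg (by linarith) m)
        _ = (1 - β) ^ (m + 1) * (r (m + 1) - s (m + 1)) := by ring
  have hbound : ∀ m, r 0 - s 0 ≤ (1 - β) ^ m * ((C - 1) * s 0) := by
    intro m
    have h1 : r m - s m ≤ (C - 1) * s m := by
      have := hCs m
      nlinarith
    have h2 : (C - 1) * s m ≤ (C - 1) * s 0 :=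
      mul_le_mul_of_nonneg_left (hs0 m) (by linarith)
    calc r 0 - s 0 ≤ (1 - β) ^ m * (r m - s m) := hchain m
      _ ≤ (1 - β) ^ m * ((C - 1) * s 0) := by
          apply mul_le_mul_of_nonneg_left _ (pow_nonneg (by linarith) m)
          linarith
  have ht : Tendsto (fun m : ℕ => (1 - β) ^ m * ((C - 1) * s 0)) atTop (𝓝 (0 * ((C - 1) * s 0))) :=
    (tendsto_pow_atTop_nhds_zero_of_lt_one (by linarith) (by linarith)).mul_const _
  rw [zero_mul] at ht
  have hrs : r 0 - s 0 ≤ 0 := ge_of_tendsto ht (Eventually.of_forall hbound)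
  have hij : e 0 i ≤ e 0 j := by
    have h1 := her 0 i
    have h2 := hes 0 j
    linarith
  rw [hedef] at hij
  exact (div_le_div_iff₀ (hv 0 i) (hv 0 j)).1 hij

end AuxStmt17

/-- for a primitive nonnegative matrix, every coherent sequence of
normalized nonnegative measures is the geometric sequence built from a Perron
eigenvector of the transpose. -/
theorem stmt17 {I : Type*} [Fintype I] [DecidableEq I] [Nonempty I]
    (a : Matrix I I ℝ) (hnonneg : ∀ i j, 0 ≤ a i j)
    (hprim : ∃ L : ℕ, 1 ≤ L ∧ ∀ i j, 0 < (a ^ L) i j)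
    (μ : ℕ → I → ℝ)
    (hμnonneg : ∀ n i, 0 ≤ μ n i)
    (hμcoh : ∀ n (i : I), μ n i = ∑ j, a j i * μ (n + 1) j)
    (hμnorm : ∑ i, μ 0 i = 1) :
    ∃ l : ℝ, 0 < l ∧ l = ∑ j, μ 0 j * (∑ i, a j i) ∧
      (∀ i, ∑ j, a j i * μ 0 j = l * μ 0 i) ∧
      (∀ n i, μ n i = l⁻¹ ^ n * μ 0 i) := by
  obtain ⟨i₀⟩ := ‹Nonempty I›
  obtain ⟨L, hL1, hLpos⟩ := hprim
  -- powers of a are nonnegative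
  have hpow : ∀ (k : ℕ) (i j : I), 0 ≤ (a ^ k) i j := by
    intro k
    induction k with
    | zero => intro i j; rw [pow_zero, Matrix.one_apply]; positivity
    | succ k ih =>
      intro i j
      rw [pow_succ, Matrix.mul_apply]
      exact Finset.sum_nonneg fun m _ => mul_nonneg (ih i m) (hnonneg m j)
  -- k-step coherence
  have cohk : ∀ (n k : ℕ) (i : I), μ n i = ∑ j, (a ^ k) j i * μ (n + k) j := by
    intro n k
    induction k with
    | zero =>
      intro i
      simp [Matrix.one_apply]
    | succ k ih =>
      intro i
      have h1 : ∀ j, μ (n + k) j = ∑ m, a m j * μ (n + k + 1) m := fun j => hμcoh (n + k) j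
      calc μ n i = ∑ j, (a ^ k) j i * μ (n + k) j := ih i
        _ = ∑ j, (a ^ k) j i * ∑ m, a m j * μ (n + k + 1) m := by
            refine sum_congr rfl fun j _ => ?_
            rw [← h1 j]
        _ = ∑ j, ∑ m, (a ^ k) j i * (a m j * μ (n + k + 1) m) := by
            refine sum_congr rfl fun j _ => ?_
            rw [mul_sum]
        _ = ∑ m, ∑ j, (a ^ k) j i * (a m j * μ (n + k + 1) m) := Finset.sum_comm
        _ = ∑ m, (a ^ (k + 1)) m i * μ (n + (k + 1)) m := by
            refine sum_congr rfl fun m _ => ?_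
            rw [pow_succ', Matrix.mul_apply, sum_mul]
            have : n + (k + 1) = n + k + 1 := by omega
            rw [this]
            refine sum_congr rfl fun j _ => ?_
            ring
  -- every level has a positive coordinate
  have hne : ∀ n, ∃ j, 0 < μ n j := by
    intro n
    by_contra h
    push_neg at h
    have hz : ∀ j, μ n j = 0 := fun j => le_antisymm (h j) (hμnonneg n j)
    have h0 : ∀ i, μ 0 i = 0 := by
      intro i
      rw [cohk 0 n i]
      simp only [Nat.zero_add]
      exact Finset.sum_eq_zero fun j _ => by rw [hz j, mul_zero]
    rw [Finset.sum_eq_zero fun i _ => h0 i] at hμnorm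
    norm_num at hμnorm
  -- all coordinates are strictly positive
  have hpos : ∀ n i, 0 < μ n i := by
    intro n i
    obtain ⟨j₀, hj₀⟩ := hne (n + L)
    rw [cohk n L i]
    apply Finset.sum_pos'
    · intro j _
      exact mul_nonneg (hpow L j i) (hμnonneg (n + L) j)
    · exact ⟨j₀, mem_univ j₀, mul_pos (hLpos j₀ i) hj₀⟩
  -- bounds on the positive matrix a^L
  obtain ⟨p, -, hpmin⟩ := Finset.exists_min_image (univ ×ˢ univ)
    (fun q : I × I => (a ^ L) q.1 q.2) ⟨(i₀, i₀), by simp⟩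
  obtain ⟨P, -, hPmax⟩ := Finset.exists_max_image (univ ×ˢ univ)
    (fun q : I × I => (a ^ L) q.1 q.2) ⟨(i₀, i₀), by simp⟩
  set δ : ℝ := (a ^ L) p.1 p.2 with hδdef
  set Δ : ℝ := (a ^ L) P.1 P.2 with hΔdef
  have hδpos : 0 < δ := hLpos p.1 p.2
  have hPl : ∀ i j, δ ≤ (a ^ L) i j := fun i j => hpmin (i, j) (by simp)
  have hPu : ∀ i j, (a ^ L) i j ≤ Δ := fun i j => hPmax (i, j) (by simp)
  -- proportionality of consecutive levels
  have hprop : ∀ n i j, μ n i * μ (n + 1) j = μ n j * μ (n + 1) i := by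
    intro n i j
    have harith : ∀ m : ℕ, ∀ c : ℕ, c + (m + 1) * L = c + m * L + L := by
      intro m c; ring
    have key := fun (c : ℕ) => key17 (a ^ L) δ Δ hδpos hPl hPu
      (fun m => μ (n + m * L)) (fun m => μ (n + 1 + m * L))
      (fun m i => hpos _ i) (fun m i => hpos _ i)
      (fun m i => by
        show μ (n + m * L) i = ∑ j, (a ^ L) j i * μ (n + (m + 1) * L) j
        rw [harith m n]
        exact cohk (n + m * L) L i)
      (fun m i => by
        show μ (n + 1 + m * L) i = ∑ j, (a ^ L) j i * μ (n + 1 + (m + 1) * L) j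
        rw [harith m (n + 1)]
        exact cohk (n + 1 + m * L) L i)
    have h1 := key 0 i j
    have h2 := key 0 j i
    simp only [Nat.zero_mul, Nat.add_zero] at h1 h2
    linarith
  -- sums
  set S : ℕ → ℝ := fun n => ∑ i, μ n i with hSdef
  have hSpos : ∀ n, 0 < S n := fun n => Finset.sum_pos (fun i _ => hpos n i) univ_nonempty
  have hrat : ∀ n i, μ (n + 1) i * S n = μ n i * S (n + 1) := by
    intro n i
    rw [hSdef]
    simp only
    rw [Finset.mul_sum, Finset.mul_sum]
    exact Finset.sum_congr rfl fun j _ => by rw [mul_comm]; exact hprop n j i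
  set l : ℝ := (S 1)⁻¹ with hldef
  have hlpos : 0 < l := inv_pos.2 (hSpos 1)
  have hS0 : S 0 = 1 := hμnorm
  have h1 : ∀ i, μ 1 i = μ 0 i * S 1 := by
    intro i
    have := hrat 0 i
    rw [hS0, mul_one] at this
    exact this
  -- eigenvector property
  have heig : ∀ i, ∑ j, a j i * μ 0 j = l * μ 0 i := by
    intro i
    have hc := hμcoh 0 i
    have : μ 0 i = S 1 * ∑ j, a j i * μ 0 j := by
      rw [hc, Finset.mul_sum]
      exact Finset.sum_congr rfl fun j _ => by rw [h1 j]; ring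
    rw [hldef, inv_mul_eq_div, eq_div_iff (hSpos 1).ne']
    rw [mul_comm]
    exact this.symm
  -- value of l
  have hlval : l = ∑ j, μ 0 j * (∑ i, a j i) := by
    have h2 : ∑ i, (l * μ 0 i) = l := by
      rw [← Finset.mul_sum, hμnorm, mul_one]
    have h3 : ∑ i, ∑ j, a j i * μ 0 j = ∑ j, μ 0 j * (∑ i, a j i) := by
      rw [Finset.sum_comm]
      exact Finset.sum_congr rfl fun j _ => by rw [Finset.mul_sum]; exact Finset.sum_congr rfl fun i _ => by ring
    rw [← h2, ← h3]
    exact Finset.sum_congr rfl fun i _ => (heig i).symm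
  -- the geometric formula
  have hgeom : ∀ n i, μ n i = l⁻¹ ^ n * μ 0 i := by
    intro n
    induction n with
    | zero => intro i; simp
    | succ n ih =>
      have hAμ : ∀ i, ∑ j, a j i * μ n j = l * μ n i := by
        intro i
        calc ∑ j, a j i * μ n j = ∑ j, a j i * (l⁻¹ ^ n * μ 0 j) := by
              exact Finset.sum_congr rfl fun j _ => by rw [ih j]
          _ = l⁻¹ ^ n * ∑ j, a j i * μ 0 j := by
              rw [Finset.mul_sum]; exact Finset.sum_congr rfl fun j _ => by ring
          _ = l⁻¹ ^ n * (l * μ 0 i) := by rw [heig i]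
          _ = l * (l⁻¹ ^ n * μ 0 i) := by ring
          _ = l * μ n i := by rw [← ih i]
      -- S n = S (n+1) * l
      have hSrel : S n = S (n + 1) * l := by
        have hc := hμcoh n i₀
        have h4 : S n * μ n i₀ = S (n + 1) * (l * μ n i₀) := by
          calc S n * μ n i₀ = S n * ∑ j, a j i₀ * μ (n + 1) j := by rw [← hc]
            _ = ∑ j, a j i₀ * (μ (n + 1) j * S n) := by
                rw [Finset.mul_sum]; exact Finset.sum_congr rfl fun j _ => by ring
            _ = ∑ j, a j i₀ * (μ n j * S (n + 1)) := by
                exact Finset.sum_congr rfl fun j _ => by rw [hrat n j]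
            _ = S (n + 1) * ∑ j, a j i₀ * μ n j := by
                rw [Finset.mul_sum]; exact Finset.sum_congr rfl fun j _ => by ring
            _ = S (n + 1) * (l * μ n i₀) := by rw [hAμ i₀]
        have hm := hpos n i₀
        have := mul_right_cancel₀ hm.ne' (by linarith [h4] : S n * μ n i₀ = S (n + 1) * l * μ n i₀)
        linarith [this]
      intro i
      have h5 := hrat n i
      rw [hSrel] at h5
      -- μ (n+1) i * (S (n+1) * l) = μ n i * S (n+1)
      have h6 : μ (n + 1) i * l = μ n i := by
        have hS1 := (hSpos (n + 1)).ne'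
        have : μ (n + 1) i * l * S (n + 1) = μ n i * S (n + 1) := by linarith [h5]
        exact mul_right_cancel₀ hS1 this
      have h7 : μ (n + 1) i = l⁻¹ * μ n i := by
        field_simp at h6 ⊢
        linarith [h6]
      rw [h7, ih i, pow_succ]
      ring
  exact ⟨l, hlpos, hlval, heig, hgeom⟩
end
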